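/- arXiv:2410.13578 — 5 statements merged into one kernel-verified Lean document; each statement's English description precedes it below -/
import Mathlib

section
/- Let q be a prime power, let K = F_{q²}, and let C₁ and C₂ be two Hermitian LCD [n,k]_{q²} codes. Then there exists a unitary matrix Q ∈ U_n(q²) such that C₂ = C₁Q. Conversely, for any Hermitian LCD [n,k]_{q²} code C and any unitary matrix Q ∈ U_n(q²), the code CQ is also a Hermitian LCD [n,k]_{q²} code. -/
open scoped BigOperators
open Matrix

noncomputable section

/-- The Hermitian inner product `⟨x,y⟩_H = ∑ i, x i * (y i)^q`, where the conjugation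
`x ↦ x^q` is given by the ring homomorphism `σ`. -/
def hermInner {K : Type*} [Field K] {n : ℕ} (σ : K →+* K) (x y : Fin n → K) : K :=
  ∑ i, x i * σ (y i)

/-- The Hermitian dual `C^{⊥H} = {y | ⟨x,y⟩_H = 0 for all x ∈ C}` of a code `C ⊆ K^n`. -/
def hermDual {K : Type*} [Field K] {n : ℕ} (σ : K →+* K) (C : Submodule K (Fin n → K)) :
    Submodule K (Fin n → K) where
  carrier := {y | ∀ x ∈ C, hermInner σ x y = 0}
  zero_mem' := by
    intro x hx
    simp [hermInner]
  add_mem' := by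
    intro y z hy hz x hx
    have h1 := hy x hx
    have h2 := hz x hx
    simp only [hermInner, Pi.add_apply, map_add, mul_add, Finset.sum_add_distrib] at h1 h2 ⊢
    rw [h1, h2, add_zero]
  smul_mem' := by
    intro c y hy x hx
    have h := hy x hx
    simp only [hermInner, Pi.smul_apply, smul_eq_mul, _root_.map_mul] at h ⊢
    calc ∑ i, x i * (σ c * σ (y i)) = σ c * ∑ i, x i * σ (y i) := by
          rw [Finset.mul_sum]; exact Finset.sum_congr rfl fun i _ => by ring
      _ = 0 := by rw [h, mul_zero]

namespace HermAux

variable {K : Type*} [Field K] {n : ℕ} (σ : K →+* K)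

/-- `x ↦ ⟨x,y⟩_H` as a linear map. -/
def hermFunc (y : Fin n → K) : (Fin n → K) →ₗ[K] K where
  toFun x := hermInner σ x y
  map_add' a b := by simp [hermInner, add_mul, Finset.sum_add_distrib]
  map_smul' c a := by
    simp only [hermInner, Pi.smul_apply, smul_eq_mul, RingHom.id_apply, Finset.mul_sum]
    exact Finset.sum_congr rfl fun i _ => by ring

variable {σ}

lemma hermFunc_apply (x y : Fin n → K) : hermFunc σ y x = hermInner σ x y := rfl

lemma hermInner_add_left (x x' y : Fin n → K) :
    hermInner σ (x + x') y = hermInner σ x y + hermInner σ x' y :=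
  map_add (hermFunc σ y) x x'

lemma hermInner_smul_left (c : K) (x y : Fin n → K) :
    hermInner σ (c • x) y = c * hermInner σ x y :=
  map_smul (hermFunc σ y) c x

lemma hermInner_sub_left (x x' y : Fin n → K) :
    hermInner σ (x - x') y = hermInner σ x y - hermInner σ x' y :=
  map_sub (hermFunc σ y) x x'

lemma hermInner_sum_left {ι : Type*} (s : Finset ι) (f : ι → Fin n → K) (y : Fin n → K) :
    hermInner σ (∑ i ∈ s, f i) y = ∑ i ∈ s, hermInner σ (f i) y :=
  map_sum (hermFunc σ y) f s

lemma hermInner_smul_right (c : K) (x y : Fin n → K) :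
    hermInner σ x (c • y) = σ c * hermInner σ x y := by
  simp only [hermInner, Pi.smul_apply, smul_eq_mul, _root_.map_mul, Finset.mul_sum]
  exact Finset.sum_congr rfl fun i _ => by ring

lemma hermInner_symm (hinv : ∀ x : K, σ (σ x) = x) (x y : Fin n → K) :
    hermInner σ y x = σ (hermInner σ x y) := by
  simp only [hermInner, map_sum, _root_.map_mul, hinv]
  exact Finset.sum_congr rfl fun i _ => by ring

lemma hermInner_single (i : Fin n) (y : Fin n → K) :
    hermInner σ (Pi.single i 1) y = σ (y i) := by
  simp [hermInner, Pi.single_apply, ite_mul]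

lemma hermInner_add_right (x y y' : Fin n → K) :
    hermInner σ x (y + y') = hermInner σ x y + hermInner σ x y' := by
  simp [hermInner, mul_add, Finset.sum_add_distrib]

lemma mem_hermDual {C : Submodule K (Fin n → K)} {y : Fin n → K} :
    y ∈ hermDual σ C ↔ ∀ x ∈ C, hermInner σ x y = 0 := Iff.rfl

lemma exists_anisotropic (hinv : ∀ x : K, σ (σ x) = x) (htr : ∃ z : K, z + σ z ≠ 0)
    {W : Submodule K (Fin n → K)} (hW : W ⊓ hermDual σ W = ⊥) (hbot : W ≠ ⊥) :
    ∃ v ∈ W, hermInner σ v v ≠ 0 := by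
  by_contra hcon
  push_neg at hcon
  obtain ⟨u, huW, hu0⟩ := Submodule.exists_mem_ne_zero_of_ne_bot hbot
  have hu_not : u ∉ hermDual σ W := by
    intro hd
    have h1 : u ∈ W ⊓ hermDual σ W := ⟨huW, hd⟩
    rw [hW] at h1
    exact hu0 h1
  rw [mem_hermDual] at hu_not
  push_neg at hu_not
  obtain ⟨x, hxW, ha⟩ := hu_not
  set a := hermInner σ x u with haa
  have hσa : σ a ≠ 0 := fun h => ha (by rw [← hinv a, h, map_zero])
  obtain ⟨z, hz⟩ := htr
  set c := z * (σ a)⁻¹ with hc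
  have key : hermInner σ (x + c • u) (x + c • u) = z + σ z := by
    rw [hermInner_add_left, hermInner_add_right, hermInner_add_right,
      hermInner_smul_left, hermInner_smul_left, hermInner_smul_right, hermInner_smul_right]
    have h1 : hermInner σ x x = 0 := hcon x hxW
    have h2 : hermInner σ u u = 0 := hcon u huW
    have h3 : hermInner σ u x = σ a := by rw [haa, hermInner_symm hinv]
    rw [h1, h2, h3, ← haa]
    have hcs : σ c = σ z * a⁻¹ := by rw [hc, _root_.map_mul, map_inv₀, hinv]
    rw [hcs, hc]
    field_simp
    ring
  have h4 := hcon (x + c • u) (W.add_mem hxW (W.smul_mem c huW))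
  rw [key] at h4
  exact hz h4

lemma exists_orthonormal_basis (hinv : ∀ x : K, σ (σ x) = x) (htr : ∃ z : K, z + σ z ≠ 0)
    (hnorm : ∀ b : K, b ≠ 0 → σ b = b → ∃ c : K, c * σ c = b) :
    ∀ (k : ℕ) (W : Submodule K (Fin n → K)), Module.finrank K W = k →
      W ⊓ hermDual σ W = ⊥ →
      ∃ v : Fin k → (Fin n → K), (∀ i, v i ∈ W) ∧ Submodule.span K (Set.range v) = W ∧
        ∀ i j, hermInner σ (v i) (v j) = if i = j then 1 else 0 := by
  intro k
  induction k with
  | zero =>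
    intro W hfr _
    refine ⟨fun i => i.elim0, fun i => i.elim0, ?_, fun i => i.elim0⟩
    have hWbot : W = ⊥ := Submodule.finrank_eq_zero.mp hfr
    simp [hWbot, Set.range_eq_empty]
  | succ k ih =>
    intro W hfr hW
    have hbot : W ≠ ⊥ := by
      intro h
      rw [h, finrank_bot] at hfr
      omega
    obtain ⟨v', hv'W, hv'⟩ := exists_anisotropic hinv htr hW hbot
    set b := hermInner σ v' v' with hb
    have hbfix : σ b = b := (hermInner_symm hinv v' v').symm
    obtain ⟨c, hcc⟩ := hnorm b⁻¹ (inv_ne_zero hv') (by rw [map_inv₀, hbfix])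
    set v₀ := c • v' with hv₀def
    have hv₀W : v₀ ∈ W := W.smul_mem _ hv'W
    have hv₀ : hermInner σ v₀ v₀ = 1 := by
      rw [hv₀def, hermInner_smul_left, hermInner_smul_right, ← mul_assoc, hcc, ← hb]
      exact inv_mul_cancel₀ hv'
    set φ := hermFunc σ v₀ with hφ
    set W' := W ⊓ LinearMap.ker φ with hW'
    have hW'le : W' ≤ W := inf_le_left
    have hdecomp : ∀ x ∈ W, x - (hermInner σ x v₀) • v₀ ∈ W' := by
      intro x hxW
      rw [hW', Submodule.mem_inf]
      refine ⟨W.sub_mem hxW (W.smul_mem _ hv₀W), ?_⟩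
      rw [LinearMap.mem_ker]
      show hermInner σ (x - hermInner σ x v₀ • v₀) v₀ = 0
      rw [hermInner_sub_left, hermInner_smul_left, hv₀, mul_one, sub_self]
    have hres : Module.finrank K W' = k := by
      have hsurj : LinearMap.range (φ.domRestrict W) = ⊤ := by
        rw [LinearMap.range_eq_top]
        intro a
        refine ⟨a • ⟨v₀, hv₀W⟩, ?_⟩
        show hermInner σ (a • v₀) v₀ = a
        rw [hermInner_smul_left, hv₀, mul_one]
      have hker : W' = Submodule.map W.subtype (LinearMap.ker (φ.domRestrict W)) := by
        rw [LinearMap.ker_domRestrict, Submodule.map_comap_subtype]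
      have hrn := LinearMap.finrank_range_add_finrank_ker (φ.domRestrict W)
      rw [hsurj, finrank_top, Module.finrank_self, hfr] at hrn
      rw [hker, Submodule.finrank_map_subtype_eq]
      omega
    have hW'lcd : W' ⊓ hermDual σ W' = ⊥ := by
      rw [eq_bot_iff]
      intro y hy
      rw [Submodule.mem_inf] at hy
      obtain ⟨hyW', hyd⟩ := hy
      rw [hW', Submodule.mem_inf] at hyW'
      obtain ⟨hyW, hyker⟩ := hyW'
      rw [LinearMap.mem_ker] at hyker
      replace hyker : hermInner σ y v₀ = 0 := hyker
      have hydual : y ∈ hermDual σ W := by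
        rw [mem_hermDual]
        intro x hxW
        have h1 : hermInner σ (x - (hermInner σ x v₀) • v₀) y = 0 :=
          hyd _ (hdecomp x hxW)
        have h2 : hermInner σ v₀ y = 0 := by
          rw [hermInner_symm hinv, hyker, map_zero]
        have h3 : hermInner σ x y
            = hermInner σ (x - (hermInner σ x v₀) • v₀) y
              + hermInner σ ((hermInner σ x v₀) • v₀) y := by
          rw [← hermInner_add_left, sub_add_cancel]
        rw [h3, h1, hermInner_smul_left, h2, mul_zero, add_zero]
      have h5 : y ∈ W ⊓ hermDual σ W := ⟨hyW, hydual⟩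
      rw [hW] at h5
      exact h5
    obtain ⟨v, hvW', hvspan, hvorth⟩ := ih W' hres hW'lcd
    have hvker : ∀ i, hermInner σ (v i) v₀ = 0 := by
      intro i
      have h := hvW' i
      rw [hW', Submodule.mem_inf] at h
      exact h.2
    refine ⟨Fin.cons v₀ v, ?_, ?_, ?_⟩
    · intro i
      refine Fin.cases ?_ ?_ i
      · exact hv₀W
      · intro j
        simp only [Fin.cons_succ]
        exact hW'le (hvW' j)
    · apply le_antisymm
      · rw [Submodule.span_le]
        rintro x ⟨i, rfl⟩
        refine Fin.cases ?_ ?_ i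
        · exact hv₀W
        · intro j
          simp only [Fin.cons_succ]
          exact hW'le (hvW' j)
      · intro x hxW
        have hx' : x - (hermInner σ x v₀) • v₀ ∈ Submodule.span K (Set.range (Fin.cons v₀ v)) := by
          have h6 : x - (hermInner σ x v₀) • v₀ ∈ W' := hdecomp x hxW
          rw [← hvspan] at h6
          refine Submodule.span_mono ?_ h6
          rintro _ ⟨i, rfl⟩
          exact ⟨i.succ, by simp⟩
        have h0 : v₀ ∈ Submodule.span K (Set.range (Fin.cons v₀ v)) :=
          Submodule.subset_span ⟨0, by simp⟩
        have h7 := Submodule.add_mem _ hx'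
          (Submodule.smul_mem _ (hermInner σ x v₀) h0)
        rwa [sub_add_cancel] at h7
    · intro i j
      refine Fin.cases ?_ ?_ i
      · refine Fin.cases ?_ ?_ j
        · simp [hv₀]
        · intro b'
          simp only [Fin.cons_zero, Fin.cons_succ]
          rw [hermInner_symm hinv, hvker, map_zero, if_neg (Ne.symm (Fin.succ_ne_zero b'))]
      · intro a'
        refine Fin.cases ?_ ?_ j
        · simp only [Fin.cons_zero, Fin.cons_succ]
          rw [hvker, if_neg (Fin.succ_ne_zero a')]
        · intro b'
          simp only [Fin.cons_succ]
          rw [hvorth]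
          exact if_congr (by simp [Fin.succ_inj]) rfl rfl

lemma hermDual_top (hinj : Function.Injective σ) :
    hermDual σ (⊤ : Submodule K (Fin n → K)) = ⊥ := by
  rw [eq_bot_iff]
  intro y hy
  rw [mem_hermDual] at hy
  have : y = 0 := by
    funext i
    have h := hy (Pi.single i 1) Submodule.mem_top
    rw [hermInner_single] at h
    have := hinj (h.trans (map_zero σ).symm)
    simpa using this
  simp [this]

lemma exists_extension (hinv : ∀ x : K, σ (σ x) = x) (htr : ∃ z : K, z + σ z ≠ 0)
    (hnorm : ∀ b : K, b ≠ 0 → σ b = b → ∃ c : K, c * σ c = b)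
    {k : ℕ} (hk : k ≤ n) (v : Fin k → (Fin n → K))
    (hv : ∀ i j, hermInner σ (v i) (v j) = if i = j then 1 else 0) :
    ∃ u : Fin (n - k) → (Fin n → K),
      (∀ a b, hermInner σ (u a) (u b) = if a = b then 1 else 0) ∧
      (∀ a i, hermInner σ (u a) (v i) = 0) := by
  set U : Submodule K (Fin n → K) := ⨅ i, LinearMap.ker (hermFunc σ (v i)) with hU
  have hmemU : ∀ y, y ∈ U ↔ ∀ i, hermInner σ y (v i) = 0 := by
    intro y
    simp only [hU, Submodule.mem_iInf, LinearMap.mem_ker]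
    rfl
  have hsum : ∀ (c : Fin k → K) (j), hermInner σ (∑ i, c i • v i) (v j) = c j := by
    intro c j
    rw [hermInner_sum_left]
    have h1 : ∀ i, hermInner σ (c i • v i) (v j) = if i = j then c i else 0 := by
      intro i
      rw [hermInner_smul_left, hv]
      by_cases h : i = j <;> simp [h]
    simp only [h1]
    simp
  have hli : LinearIndependent K v := by
    rw [Fintype.linearIndependent_iff]
    intro g hg j
    have := hsum g j
    rw [hg] at this
    simpa [hermInner] using this.symm
  have hdec : ∀ x : Fin n → K, x - ∑ i, hermInner σ x (v i) • v i ∈ U := by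
    intro x
    rw [hmemU]
    intro j
    rw [hermInner_sub_left, hsum, sub_self]
  have hsup : Submodule.span K (Set.range v) ⊔ U = ⊤ := by
    rw [eq_top_iff]
    intro x _
    have h1 : (∑ i, hermInner σ x (v i) • v i) ∈ Submodule.span K (Set.range v) :=
      Submodule.sum_mem _ fun i _ =>
        Submodule.smul_mem _ _ (Submodule.subset_span ⟨i, rfl⟩)
    have h2 := Submodule.add_mem (Submodule.span K (Set.range v) ⊔ U)
      (Submodule.mem_sup_left h1) (Submodule.mem_sup_right (hdec x))
    rwa [add_sub_cancel] at h2
  have hinf : Submodule.span K (Set.range v) ⊓ U = ⊥ := by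
    rw [eq_bot_iff]
    intro x hx
    rw [Submodule.mem_inf] at hx
    obtain ⟨hx1, hx2⟩ := hx
    rw [Submodule.mem_span_range_iff_exists_fun] at hx1
    obtain ⟨c, hc⟩ := hx1
    have : ∀ j, c j = 0 := by
      intro j
      have := hsum c j
      rw [hc] at this
      rw [← this]
      exact ((hmemU x).mp hx2 j).symm ▸ rfl
    rw [Submodule.mem_bot, ← hc]
    simp [this]
  have hUrank : Module.finrank K U = n - k := by
    have h := Submodule.finrank_sup_add_finrank_inf_eq (Submodule.span K (Set.range v)) U
    rw [hsup, hinf, finrank_top, finrank_bot, finrank_span_eq_card hli] at h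
    have hpi : Module.finrank K (Fin n → K) = n := by
      rw [Module.finrank_pi]
      simp
    rw [hpi, Fintype.card_fin] at h
    omega
  have hUlcd : U ⊓ hermDual σ U = ⊥ := by
    rw [eq_bot_iff]
    intro y hy
    rw [Submodule.mem_inf] at hy
    obtain ⟨hyU, hyd⟩ := hy
    have hdual : y ∈ hermDual σ (⊤ : Submodule K (Fin n → K)) := by
      rw [mem_hermDual]
      intro x _
      have h1 : hermInner σ (x - ∑ i, hermInner σ x (v i) • v i) y = 0 :=
        hyd _ (hdec x)
      have h2 : ∀ i, hermInner σ (v i) y = 0 := by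
        intro i
        rw [hermInner_symm hinv, (hmemU y).mp hyU i, map_zero]
      have h3 : hermInner σ (∑ i, hermInner σ x (v i) • v i) y = 0 := by
        rw [hermInner_sum_left]
        apply Finset.sum_eq_zero
        intro i _
        rw [hermInner_smul_left, h2, mul_zero]
      have h4 : hermInner σ x y
          = hermInner σ (x - ∑ i, hermInner σ x (v i) • v i) y
            + hermInner σ (∑ i, hermInner σ x (v i) • v i) y := by
        rw [← hermInner_add_left, sub_add_cancel]
      rw [h4, h1, h3, add_zero]
    rw [hermDual_top (RingHom.injective σ)] at hdual
    exact hdual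
  obtain ⟨u, huU, _, huorth⟩ :=
    exists_orthonormal_basis hinv htr hnorm (n - k) U hUrank hUlcd
  exact ⟨u, huorth, fun a i => (hmemU _).mp (huU a) i⟩

variable (σ) in
/-- Standard generators of the "first k coordinates" code. -/
def stdGen (K : Type*) [Field K] (n k : ℕ) (a : Fin k) : Fin n → K :=
  fun j => if (j : ℕ) = (a : ℕ) then 1 else 0

/-- The standard `[n,k]` code spanned by the first `k` standard basis vectors. -/
def ECode (K : Type*) [Field K] (n k : ℕ) : Submodule K (Fin n → K) :=
  Submodule.span K (Set.range (stdGen K n k))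

lemma exists_unitary (hinv : ∀ x : K, σ (σ x) = x) (htr : ∃ z : K, z + σ z ≠ 0)
    (hnorm : ∀ b : K, b ≠ 0 → σ b = b → ∃ c : K, c * σ c = b)
    {k : ℕ} (C : Submodule K (Fin n → K))
    (hC : Module.finrank K C = k) (hL : C ⊓ hermDual σ C = ⊥) :
    ∃ Q : Matrix (Fin n) (Fin n) K, Q * (Q.map σ)ᵀ = 1 ∧
      C = (ECode K n k).map (Matrix.vecMulLinear Q) := by
  have hk : k ≤ n := by
    rw [← hC]
    have h := Submodule.finrank_le C
    have hpi : Module.finrank K (Fin n → K) = n := by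
      rw [Module.finrank_pi]; simp
    rwa [hpi] at h
  obtain ⟨v, hvC, hvspan, hvorth⟩ :=
    exists_orthonormal_basis hinv htr hnorm k C hC hL
  obtain ⟨u, huorth, huv⟩ := exists_extension hinv htr hnorm hk v hvorth
  have hvu : ∀ i a, hermInner σ (v i) (u a) = 0 := by
    intro i a
    rw [hermInner_symm hinv, huv, map_zero]
  set w : Fin n → (Fin n → K) := fun i =>
    if h : (i : ℕ) < k then v ⟨i, h⟩ else u ⟨(i : ℕ) - k, by omega⟩ with hw
  set Q : Matrix (Fin n) (Fin n) K := Matrix.of w with hQ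
  have hworth : ∀ i j, hermInner σ (w i) (w j) = if i = j then 1 else 0 := by
    intro i j
    by_cases hi : (i : ℕ) < k <;> by_cases hj : (j : ℕ) < k
    · rw [hw]
      simp only [dif_pos hi, dif_pos hj, hvorth]
      exact if_congr (by simp [Fin.ext_iff]) rfl rfl
    · rw [hw]
      simp only [dif_pos hi, dif_neg hj, hvu]
      rw [if_neg (show ¬ i = j by rintro rfl; exact hj hi)]
    · rw [hw]
      simp only [dif_neg hi, dif_pos hj, huv]
      rw [if_neg (show ¬ i = j by rintro rfl; exact hi hj)]
    · rw [hw]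
      simp only [dif_neg hi, dif_neg hj, huorth]
      refine if_congr ?_ rfl rfl
      rw [Fin.ext_iff, Fin.ext_iff]
      simp only []
      omega
  have hQunit : Q * (Q.map σ)ᵀ = 1 := by
    ext i j
    rw [Matrix.mul_apply, Matrix.one_apply]
    have : ∀ l, Q i l * (Q.map σ)ᵀ l j = w i l * σ (w j l) := by
      intro l
      rw [Matrix.transpose_apply, Matrix.map_apply]
      rfl
    simp only [this]
    exact hworth i j
  have hrow : ∀ a : Fin k, Matrix.vecMulLinear Q (stdGen K n k a) = v a := by
    intro a
    rw [Matrix.vecMulLinear_apply]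
    funext j
    have h1 : (stdGen K n k a ᵥ* Q) j = ∑ l, stdGen K n k a l * Q l j := rfl
    rw [h1]
    have h2 : ∀ l : Fin n, stdGen K n k a l * Q l j
        = if l = Fin.castLE hk a then Q l j else 0 := by
      intro l
      rw [stdGen]
      by_cases h : (l : ℕ) = (a : ℕ)
      · rw [if_pos h, if_pos (by rw [Fin.ext_iff]; exact h), one_mul]
      · rw [if_neg h, if_neg (by rw [Fin.ext_iff]; exact h), zero_mul]
    simp only [h2]
    rw [Finset.sum_ite_eq' Finset.univ (Fin.castLE hk a) (fun l => Q l j),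
      if_pos (Finset.mem_univ _)]
    have h3 : ((Fin.castLE hk a : Fin n) : ℕ) < k := a.isLt
    show w (Fin.castLE hk a) j = v a j
    rw [hw]
    simp only [dif_pos h3]
    congr 1
  have hmap : (ECode K n k).map (Matrix.vecMulLinear Q) = C := by
    rw [ECode, Submodule.map_span, ← Set.range_comp]
    have h : (⇑(Matrix.vecMulLinear Q) ∘ stdGen K n k) = v := funext fun a => hrow a
    rw [h, hvspan]
  exact ⟨Q, hQunit, hmap.symm⟩

lemma conj_vecMul (Q : Matrix (Fin n) (Fin n) K) (y : Fin n → K) :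
    (fun j => σ ((y ᵥ* Q) j)) = (fun i => σ (y i)) ᵥ* (Q.map σ) := by
  funext j
  simp [Matrix.vecMul, dotProduct, map_sum, _root_.map_mul, Matrix.map_apply]

lemma herm_vecMul_unitary {Q : Matrix (Fin n) (Fin n) K} (hQ : Q * (Q.map σ)ᵀ = 1)
    (x y : Fin n → K) :
    hermInner σ (x ᵥ* Q) (y ᵥ* Q) = hermInner σ x y := by
  have h0 : ∀ (a b : Fin n → K), hermInner σ a b = a ⬝ᵥ (fun i => σ (b i)) := fun a b => rfl
  rw [h0, h0, conj_vecMul,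
    show (fun i => σ (y i)) ᵥ* Q.map σ = (Q.map σ)ᵀ *ᵥ (fun i => σ (y i)) from
      (Matrix.mulVec_transpose _ _).symm,
    Matrix.dotProduct_mulVec, Matrix.vecMul_vecMul, hQ, Matrix.vecMul_one]

lemma hermDual_map_unitary {Q : Matrix (Fin n) (Fin n) K} (hQ : Q * (Q.map σ)ᵀ = 1)
    (C : Submodule K (Fin n → K)) :
    hermDual σ (C.map (Matrix.vecMulLinear Q))
      = (hermDual σ C).map (Matrix.vecMulLinear Q) := by
  have hQ' : (Q.map σ)ᵀ * Q = 1 := mul_eq_one_comm.mp hQ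
  ext y
  constructor
  · intro hy
    rw [mem_hermDual] at hy
    rw [Submodule.mem_map]
    refine ⟨y ᵥ* (Q.map σ)ᵀ, ?_, ?_⟩
    · rw [mem_hermDual]
      intro x hx
      have h1 := hy (x ᵥ* Q) (Submodule.mem_map.mpr
        ⟨x, hx, Matrix.vecMulLinear_apply Q x⟩)
      calc hermInner σ x (y ᵥ* (Q.map σ)ᵀ)
          = hermInner σ (x ᵥ* Q) ((y ᵥ* (Q.map σ)ᵀ) ᵥ* Q) :=
            (herm_vecMul_unitary hQ _ _).symm
        _ = hermInner σ (x ᵥ* Q) y := by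
            rw [Matrix.vecMul_vecMul, hQ', Matrix.vecMul_one]
        _ = 0 := h1
    · rw [Matrix.vecMulLinear_apply, Matrix.vecMul_vecMul, hQ', Matrix.vecMul_one]
  · intro hy
    rw [Submodule.mem_map] at hy
    obtain ⟨z, hz, rfl⟩ := hy
    rw [mem_hermDual]
    intro x' hx'
    rw [Submodule.mem_map] at hx'
    obtain ⟨x, hx, rfl⟩ := hx'
    rw [Matrix.vecMulLinear_apply, Matrix.vecMulLinear_apply, herm_vecMul_unitary hQ]
    exact hz x hx

lemma conjT_conjT (hinv : ∀ x : K, σ (σ x) = x) (Q : Matrix (Fin n) (Fin n) K) :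
    ((Q.map σ)ᵀ.map σ)ᵀ = Q := by
  ext i j
  simp [Matrix.map_apply, Matrix.transpose_apply, hinv]

lemma map_vecMulLinear_mul (A B : Matrix (Fin n) (Fin n) K) (S : Submodule K (Fin n → K)) :
    S.map (Matrix.vecMulLinear (A * B))
      = (S.map (Matrix.vecMulLinear A)).map (Matrix.vecMulLinear B) := by
  rw [← Submodule.map_comp]
  congr 1
  refine LinearMap.ext fun x => ?_
  simp [Matrix.vecMulLinear_apply, Matrix.vecMul_vecMul]

lemma vecMulLinear_one' :
    Matrix.vecMulLinear (1 : Matrix (Fin n) (Fin n) K) = LinearMap.id :=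
  LinearMap.ext fun x => by simp [Matrix.vecMulLinear_apply, Matrix.vecMul_one]

end HermAux


section FieldFacts
variable {q : ℕ} {K : Type*} [Field K] [Fintype K] {σ : K →+* K}

lemma sigma_sigma (hK : Fintype.card K = q ^ 2) (hσ : ∀ x : K, σ x = x ^ q) (x : K) :
    σ (σ x) = x := by
  rw [hσ, hσ, ← pow_mul, ← pow_two, ← hK, FiniteField.pow_card]

lemma trace_exists (hq : IsPrimePow q) (hK : Fintype.card K = q ^ 2)
    (hσ : ∀ x : K, σ x = x ^ q) : ∃ z : K, z + σ z ≠ 0 := by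
  by_contra h
  push_neg at h
  have hq2 : 2 ≤ q := hq.two_le
  set p : Polynomial K := Polynomial.X ^ q + Polynomial.X with hp
  have hdeg : p.natDegree < Fintype.card K := by
    have h1 : p.natDegree ≤ q := by
      refine le_trans (Polynomial.natDegree_add_le _ _) ?_
      simp only [Polynomial.natDegree_X_pow, Polynomial.natDegree_X]
      omega
    rw [hK]
    nlinarith
  have hzero : p = 0 := by
    refine Polynomial.eq_zero_of_natDegree_lt_card_of_eval_eq_zero p Function.injective_id
      (fun z => ?_) hdeg
    have hz := h z
    rw [hσ] at hz
    simp only [hp, Polynomial.eval_add, Polynomial.eval_pow, Polynomial.eval_X, id]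
    linear_combination hz
  have hc : p.coeff 1 = 1 := by
    rw [hp, Polynomial.coeff_add, Polynomial.coeff_X_pow, Polynomial.coeff_X_one,
      if_neg (by omega : ¬ 1 = q), zero_add]
  rw [hzero] at hc
  simp at hc

lemma norm_exists (hq : IsPrimePow q) (hK : Fintype.card K = q ^ 2)
    (hσ : ∀ x : K, σ x = x ^ q) (b : K) (hb : b ≠ 0) (hfix : σ b = b) :
    ∃ c : K, c * σ c = b := by
  have hq2 : 2 ≤ q := hq.two_le
  letI : DecidableEq K := Classical.decEq K
  have hcard : Fintype.card Kˣ = q ^ 2 - 1 := by rw [Fintype.card_units, hK]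
  obtain ⟨g, hg⟩ := IsCyclic.exists_generator (α := Kˣ)
  have horder : orderOf g = q ^ 2 - 1 := by
    rw [orderOf_eq_card_of_forall_mem_zpowers hg, Nat.card_eq_fintype_card, hcard]
  set bu : Kˣ := Units.mk0 b hb with hbu
  obtain ⟨m, hm⟩ := Subgroup.mem_zpowers_iff.mp (hg bu)
  have hbq : b ^ (q - 1) = 1 := by
    have h1 : b ^ q = b := by rw [← hσ, hfix]
    have h2 : b ^ (q - 1) * b = b := by
      rw [← pow_succ, Nat.sub_add_cancel (by omega)]; exact h1
    have h3 := mul_right_cancel₀ hb (h2.trans (one_mul b).symm)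
    exact h3
  have hb1 : bu ^ (q - 1) = 1 := Units.ext (by simp [hbu, hbq])
  have hdvd : ((q ^ 2 - 1 : ℕ) : ℤ) ∣ m * ((q - 1 : ℕ) : ℤ) := by
    rw [← horder]
    rw [orderOf_dvd_iff_zpow_eq_one, _root_.zpow_mul, hm, zpow_natCast, hb1]
  have hfact : ((q ^ 2 - 1 : ℕ) : ℤ) = ((q + 1 : ℕ) : ℤ) * ((q - 1 : ℕ) : ℤ) := by
    have e1 : (1 : ℕ) ≤ q := by omega
    have e2 : (1 : ℕ) ≤ q ^ 2 := by nlinarith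
    push_cast [e1, e2]
    ring
  have hne : ((q - 1 : ℕ) : ℤ) ≠ 0 := by
    simp only [ne_eq, Nat.cast_eq_zero]; omega
  have hqd : ((q + 1 : ℕ) : ℤ) ∣ m := by
    rw [hfact] at hdvd
    exact (mul_dvd_mul_iff_right hne).mp hdvd
  obtain ⟨t, ht⟩ := hqd
  refine ⟨((g ^ t : Kˣ) : K), ?_⟩
  rw [hσ]
  have h1 : ((g ^ t : Kˣ) : K) * ((g ^ t : Kˣ) : K) ^ q = (((g ^ t) ^ (q + 1) : Kˣ) : K) := by
    push_cast
    ring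
  rw [h1]
  have h2 : (g ^ t) ^ (q + 1) = bu := by
    rw [← zpow_natCast (g ^ t) (q + 1), ← _root_.zpow_mul, ← hm, ht]
    ring_nf
  rw [h2, hbu, Units.val_mk0]

end FieldFacts


/-- Any two Hermitian LCD `[n,k]_{q²}` codes lie on the same orbit of the
unitary group `U_n(q²)`, and the unitary group preserves the class of Hermitian LCD
`[n,k]_{q²}` codes. -/
theorem hermitianLCD_unitary_orbit
    (q : ℕ) (hq : IsPrimePow q)
    {K : Type*} [Field K] [Fintype K] (hK : Fintype.card K = q ^ 2)
    (σ : K →+* K) (hσ : ∀ x : K, σ x = x ^ q)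
    (n k : ℕ)
    (C₁ C₂ : Submodule K (Fin n → K))
    (hC₁ : Module.finrank K C₁ = k) (hC₂ : Module.finrank K C₂ = k)
    (hL₁ : C₁ ⊓ hermDual σ C₁ = ⊥) (hL₂ : C₂ ⊓ hermDual σ C₂ = ⊥) :
    (∃ Q : Matrix (Fin n) (Fin n) K, IsUnit Q ∧ Q * (Q.map σ)ᵀ = 1 ∧
        C₂ = C₁.map (Matrix.vecMulLinear Q)) ∧
    ∀ C : Submodule K (Fin n → K), Module.finrank K C = k → C ⊓ hermDual σ C = ⊥ →
      ∀ Q : Matrix (Fin n) (Fin n) K, IsUnit Q → Q * (Q.map σ)ᵀ = 1 →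
        Module.finrank K (C.map (Matrix.vecMulLinear Q)) = k ∧
          C.map (Matrix.vecMulLinear Q) ⊓ hermDual σ (C.map (Matrix.vecMulLinear Q)) = ⊥ := by
  have hinv : ∀ x : K, σ (σ x) = x := sigma_sigma hK hσ
  have htr : ∃ z : K, z + σ z ≠ 0 := trace_exists hq hK hσ
  have hnorm : ∀ b : K, b ≠ 0 → σ b = b → ∃ c : K, c * σ c = b := norm_exists hq hK hσ
  constructor
  · obtain ⟨Q₁, hQ₁, hE₁⟩ := HermAux.exists_unitary hinv htr hnorm C₁ hC₁ hL₁
    obtain ⟨Q₂, hQ₂, hE₂⟩ := HermAux.exists_unitary hinv htr hnorm C₂ hC₂ hL₂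
    refine ⟨(Q₁.map σ)ᵀ * Q₂, ?_, ?_, ?_⟩
    · have hu1 : IsUnit ((Q₁.map σ)ᵀ) :=
        ⟨⟨(Q₁.map σ)ᵀ, Q₁, mul_eq_one_comm.mp hQ₁, hQ₁⟩, rfl⟩
      have hu2 : IsUnit Q₂ := ⟨⟨Q₂, (Q₂.map σ)ᵀ, hQ₂, mul_eq_one_comm.mp hQ₂⟩, rfl⟩
      exact hu1.mul hu2
    · have e1 : (((Q₁.map σ)ᵀ * Q₂).map σ)ᵀ = (Q₂.map σ)ᵀ * Q₁ := by
        rw [Matrix.map_mul, Matrix.transpose_mul, HermAux.conjT_conjT hinv]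
      rw [e1, Matrix.mul_assoc, ← Matrix.mul_assoc Q₂, hQ₂, Matrix.one_mul]
      exact mul_eq_one_comm.mp hQ₁
    · symm
      rw [HermAux.map_vecMulLinear_mul, hE₁,
        ← HermAux.map_vecMulLinear_mul Q₁ ((Q₁.map σ)ᵀ) (HermAux.ECode K n k), hQ₁,
        HermAux.vecMulLinear_one', Submodule.map_id]
      exact hE₂.symm
  · intro C hCk hCL Q _ hQ1
    have hback : (C.map (Matrix.vecMulLinear Q)).map (Matrix.vecMulLinear (Q.map σ)ᵀ) = C := by
      rw [← HermAux.map_vecMulLinear_mul, hQ1, HermAux.vecMulLinear_one', Submodule.map_id]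
    have hinj : Function.Injective (Matrix.vecMulLinear Q) := by
      intro a b hab
      rw [Matrix.vecMulLinear_apply, Matrix.vecMulLinear_apply] at hab
      have h3 : ∀ c : Fin n → K, (c ᵥ* Q) ᵥ* (Q.map σ)ᵀ = c := by
        intro c
        rw [Matrix.vecMul_vecMul, hQ1, Matrix.vecMul_one]
      calc a = (a ᵥ* Q) ᵥ* (Q.map σ)ᵀ := (h3 a).symm
        _ = (b ᵥ* Q) ᵥ* (Q.map σ)ᵀ := by rw [hab]
        _ = b := h3 b
    constructor
    · have h1 : Module.finrank K (C.map (Matrix.vecMulLinear Q)) ≤ k := by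
        rw [← hCk]
        exact Submodule.finrank_map_le _ _
      have h2 : k ≤ Module.finrank K (C.map (Matrix.vecMulLinear Q)) := by
        calc k = Module.finrank K C := hCk.symm
          _ = Module.finrank K
              ((C.map (Matrix.vecMulLinear Q)).map (Matrix.vecMulLinear (Q.map σ)ᵀ)) := by
            rw [hback]
          _ ≤ Module.finrank K (C.map (Matrix.vecMulLinear Q)) :=
            Submodule.finrank_map_le _ _
      omega
    · rw [HermAux.hermDual_map_unitary hQ1, ← Submodule.map_inf _ hinj, hCL,
        Submodule.map_bot]
end
end

section
/- Let q be a prime power and K = F_{q²}. The number of solutions (x₁,…,x_n) ∈ K^n of the diagonal equation x₁^{q+1} + x₂^{q+1} + ⋯ + x_n^{q+1} = 0 equals q^{n−1}(q^n − q + 1) if n is odd, and equals q^{n−1}(q^n + q − 1) if n is even. -/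
/-!
Write `N_n(a)` for the number of solutions of `x₁^(q+1) + ⋯ + x_n^(q+1) = a`. On `K = 𝔽_{q²}`
the map `x ↦ x^(q+1)` is the norm to the subfield `F = 𝔽_q`, so it maps `K` onto `F`. Hence every
sum of such powers lies in `F`, so `N_n` vanishes off `F`; and rescaling solutions by an `s` with
`s^(q+1) = a` shows that `N_n` is constant on `Fˣ`. Counting all `n`-tuples gives
`N_n(0) + (q - 1) N_n(1) = q^(2n)`, and splitting off the first coordinate gives
`N_{n+1}(0) = N_n(0) + (q² - 1) N_n(1)`. Eliminating `N_n(1)` leaves the linear recurrence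
`N_{n+1}(0) = (q + 1) q^(2n) - q N_n(0)`, solved by `q^(n-1) (q^n + (-1)^n (q - 1))`.
-/

open Finset

section CommRing

variable {K : Type*} [CommRing K] (d : ℕ)

/-- The paper's `N_a^d(n)`. -/
noncomputable def diagCount (n : ℕ) (a : K) : ℕ :=
  Nat.card {x : Fin n → K // ∑ i, x i ^ d = a}

theorem diagCount_zero_zero : diagCount d 0 (0 : K) = 1 := by
  simp [diagCount]

theorem diagCount_succ [Fintype K] (n : ℕ) (a : K) :
    diagCount d (n + 1) a = ∑ x₀ : K, diagCount d n (a - x₀ ^ d) := by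
  let e : {x : Fin (n + 1) → K // ∑ i, x i ^ d = a} ≃
      {c : K × (Fin n → K) // ∑ i, c.2 i ^ d = a - c.1 ^ d} :=
    (Fin.consEquiv fun _ => K).symm.subtypeEquiv fun x => by
      simp [Fin.consEquiv, Fin.sum_univ_succ, eq_sub_iff_add_eq', Fin.tail]
  rw [diagCount, Nat.card_congr (e.trans (Equiv.subtypeProdEquivSigmaSubtype
    fun (x₀ : K) (y : Fin n → K) => ∑ i, y i ^ d = a - x₀ ^ d)), Nat.card_sigma]
  rfl

theorem sum_diagCount [Fintype K] (n : ℕ) :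
    ∑ a : K, diagCount d n a = Fintype.card K ^ n := by
  simp only [diagCount]
  rw [← Nat.card_sigma, Nat.card_congr (Equiv.sigmaFiberEquiv _), Nat.card_eq_fintype_card,
    Fintype.card_fun, Fintype.card_fin]

theorem diagCount_eq_zero_of_notMem {S : AddSubmonoid K} (hS : ∀ x : K, x ^ d ∈ S) {a : K}
    (ha : a ∉ S) (n : ℕ) : diagCount d n a = 0 := by
  rw [diagCount, Nat.card_eq_zero]
  exact .inl ⟨fun ⟨x, hx⟩ => ha (hx ▸ sum_mem fun i _ => hS (x i))⟩

end CommRing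

section Field

variable {K : Type*} [Field K] {d : ℕ}

theorem diagCount_pow_mul (n : ℕ) {s : K} (hs : s ≠ 0) (a : K) :
    diagCount d n (s ^ d * a) = diagCount d n a := by
  let e := (Equiv.piCongrRight fun _ => Equiv.mulLeft₀ s hs).subtypeEquiv
    (p := fun y : Fin n → K => ∑ i, y i ^ d = a) (q := fun x => ∑ i, x i ^ d = s ^ d * a)
    fun y => by simp [mul_pow, ← mul_sum, hs]
  exact (Nat.card_congr e).symm

variable {F : Subfield K}

theorem ne_zero_of_range_pow_eq (hd : Set.range (fun x : K => x ^ d) = F) : d ≠ 0 := by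
  rintro rfl
  have : (0 : K) ∈ Set.range fun x : K => x ^ 0 := hd ▸ F.zero_mem
  simp at this

theorem pow_mem_of_range_pow_eq (hd : Set.range (fun x : K => x ^ d) = F) (x : K) :
    x ^ d ∈ F := by
  rw [← SetLike.mem_coe, ← hd]
  exact Set.mem_range_self x

theorem diagCount_eq_diagCount_one (hd : Set.range (fun x : K => x ^ d) = F) {a : K} (ha : a ∈ F)
    (ha0 : a ≠ 0) (n : ℕ) : diagCount d n a = diagCount d n (1 : K) := by
  obtain ⟨s, rfl⟩ : a ∈ Set.range fun x : K => x ^ d := hd ▸ ha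
  have hs : s ≠ 0 := by
    rintro rfl
    exact ha0 (zero_pow (ne_zero_of_range_pow_eq hd))
  simpa using diagCount_pow_mul n hs (1 : K)

variable [Fintype K]

theorem diagCount_zero_add_mul (hd : Set.range (fun x : K => x ^ d) = F) (n : ℕ) :
    diagCount d n (0 : K) + (Nat.card F - 1) * diagCount d n (1 : K) = Fintype.card K ^ n := by
  classical
  have hrange : ∀ a ∉ Set.range ((↑) : F → K), diagCount d n a = 0 := fun a ha =>
    diagCount_eq_zero_of_notMem d (S := F.toAddSubmonoid) (pow_mem_of_range_pow_eq hd)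
      (by rwa [Subtype.range_coe] at ha) n
  have hunit : ∀ c ∈ ({0}ᶜ : Finset F), diagCount d n (c : K) = diagCount d n (1 : K) :=
    fun c hc => diagCount_eq_diagCount_one hd c.2 (by simpa using hc) n
  rw [← sum_diagCount, ← Fintype.sum_of_injective ((↑) : F → K) Subtype.val_injective
    (fun c => diagCount d n (c : K)) _ hrange fun _ => rfl, Fintype.sum_eq_add_sum_compl 0,
    sum_congr rfl hunit, sum_const, card_compl, card_singleton, smul_eq_mul,
    Fintype.card_eq_nat_card]
  rfl

theorem diagCount_succ_zero (hd : Set.range (fun x : K => x ^ d) = F) (n : ℕ) :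
    diagCount d (n + 1) (0 : K) =
      diagCount d n (0 : K) + (Fintype.card K - 1) * diagCount d n (1 : K) := by
  classical
  have hunit : ∀ x ∈ ({0}ᶜ : Finset K), diagCount d n (0 - x ^ d) = diagCount d n (1 : K) :=
    fun x hx => zero_sub (x ^ d) ▸ diagCount_eq_diagCount_one hd
      (F.neg_mem (pow_mem_of_range_pow_eq hd x))
      (neg_ne_zero.2 (pow_ne_zero _ (by simpa using hx))) n
  rw [diagCount_succ, Fintype.sum_eq_add_sum_compl 0, sum_congr rfl hunit, sum_const,
    card_compl, card_singleton, smul_eq_mul, zero_pow (ne_zero_of_range_pow_eq hd), sub_zero]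

end Field

theorem exists_subfield_natCard_eq {K : Type*} [Field K] [Fintype K] {q k : ℕ}
    (hq : IsPrimePow q) (hK : Fintype.card K = q ^ k) : ∃ F : Subfield K, Nat.card F = q := by
  obtain ⟨p, m, hp, hm, rfl⟩ := hq
  have hp := Nat.prime_iff.mpr hp
  have := Fact.mk hp
  rw [← pow_mul] at hK
  have := charP_of_card_eq_prime_pow hK
  let := ZMod.algebra K p
  have hrank : Module.finrank (ZMod p) K = m * k := Nat.pow_right_injective hp.two_le
    (show p ^ _ = p ^ _ by rw [FiniteField.pow_finrank_eq_card, hK])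
  obtain ⟨ι⟩ := FiniteField.nonempty_algHom_of_finrank_dvd (F := ZMod p) (K := GaloisField p m)
    (L := K) (by rw [GaloisField.finrank p hm.ne', hrank]; exact dvd_mul_right m k)
  refine ⟨ι.toRingHom.fieldRange, ?_⟩
  rw [← SetLike.coe_sort_coe, RingHom.coe_fieldRange, Nat.card_range_of_injective ι.injective,
    GaloisField.card p m hm.ne']

theorem range_pow_eq_subfield {K : Type*} [Field K] [Finite K] (F : Subfield K) :
    Set.range (fun x : K => x ^ ((Nat.card K - 1) / (Nat.card F - 1))) = F := by
  have hnorm : (fun x : K => x ^ ((Nat.card K - 1) / (Nat.card F - 1))) =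
      (↑) ∘ Algebra.norm F := funext fun _ => FiniteField.algebraMap_norm_eq_pow.symm
  rw [hnorm, Set.range_comp, (FiniteField.norm_surjective F K).range_eq, Set.image_univ,
    Subtype.range_coe]

theorem eq_of_succ_eq_mul_sub {q : ℤ} {u : ℕ → ℤ} (h0 : u 0 = 1)
    (hsucc : ∀ n, u (n + 1) = (q + 1) * q ^ (2 * n) - q * u n) (m : ℕ) :
    u (m + 1) = q ^ m * (q ^ (m + 1) + (-1) ^ (m + 1) * (q - 1)) := by
  induction m with
  | zero => rw [hsucc, h0]; ring
  | succ m ih => rw [hsucc, ih]; ring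

theorem diagCount_succ_zero_eq_of_natCard {K : Type*} [Field K] [Fintype K] {F : Subfield K}
    {q : ℕ} (hF : Nat.card F = q) (hK : Fintype.card K = q ^ 2)
    (hd : Set.range (fun x : K => x ^ (q + 1)) = F) (n : ℕ) :
    (diagCount (q + 1) (n + 1) (0 : K) : ℤ) =
      (q + 1) * q ^ (2 * n) - q * diagCount (q + 1) n (0 : K) := by
  have hq : 1 < q := hF ▸ Finite.one_lt_card
  have hrec := diagCount_succ_zero hd n
  have htot := diagCount_zero_add_mul hd n
  rw [hK] at hrec htot
  rw [hF] at htot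
  zify [hq.le, Nat.one_le_pow 2 q (by omega)] at hrec htot
  apply mul_left_cancel₀ (sub_ne_zero.2 (by exact_mod_cast hq.ne') : (q : ℤ) - 1 ≠ 0)
  linear_combination (↑q - 1) * hrec + (↑q ^ 2 - 1) * htot

/-- In the finite field `K = F_{q²}`, the number of solutions of the
diagonal equation `x₁^{q+1} + ⋯ + x_n^{q+1} = 0` is `q^{n-1}(q^n - q + 1)` if `n` is odd
and `q^{n-1}(q^n + q - 1)` if `n` is even. -/
theorem card_diagonal_eq_zero
    (q : ℕ) (hq : IsPrimePow q)
    {K : Type*} [Field K] [Fintype K] (hK : Fintype.card K = q ^ 2)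
    (n : ℕ) (hn : 0 < n) :
    (Nat.card {x : Fin n → K // ∑ i, x i ^ (q + 1) = 0} : ℤ) =
      if Odd n then (q : ℤ) ^ (n - 1) * ((q : ℤ) ^ n - q + 1)
      else (q : ℤ) ^ (n - 1) * ((q : ℤ) ^ n + q - 1) := by
  obtain ⟨F, hF⟩ := exists_subfield_natCard_eq hq hK
  have hd : Set.range (fun x : K => x ^ (q + 1)) = F := by
    rw [← range_pow_eq_subfield F, hF, Nat.card_eq_fintype_card, hK,
      Nat.div_eq_of_eq_mul_left (by have := hq.one_lt; omega) (by simpa using Nat.sq_sub_sq q 1)]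
  obtain ⟨m, rfl⟩ : ∃ m, n = m + 1 := ⟨n - 1, by omega⟩
  have h := eq_of_succ_eq_mul_sub (u := fun k => (diagCount (q + 1) k (0 : K) : ℤ))
    (by simp [diagCount_zero_zero]) (diagCount_succ_zero_eq_of_natCard hF hK hd) m
  change (diagCount (q + 1) (m + 1) (0 : K) : ℤ) = _
  rw [h, Nat.add_sub_cancel]
  split_ifs with hodd
  · rw [hodd.neg_one_pow]; ring
  · rw [(Nat.not_odd_iff_even.mp hodd).neg_one_pow]; ring
end

section
/- Let q be a prime power, K = F_{q²}, and let C be a Hermitian LCD [n,k]_{q²} code. Then the number of Hermitian self-orthogonal codewords of C, i.e. the number of c ∈ C with ⟨c,c⟩_H = 0, equals N₀^{q+1}(k), which is q^{k−1}(q^k − q + 1) if k is odd and q^{k−1}(q^k + q − 1) if k is even. -/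
open scoped BigOperators
open Matrix

noncomputable section

/-- `N₀^{q+1}(m) = q^{m-1}(q^m - q + 1)` for odd `m` and `q^{m-1}(q^m + q - 1)` for even
`m`: the number of solutions of `x₁^{q+1} + ⋯ + x_m^{q+1} = 0` in `F_{q²}^m`. -/
def N0 (q : ℤ) (m : ℕ) : ℤ :=
  if Odd m then q ^ (m - 1) * (q ^ m - q + 1) else q ^ (m - 1) * (q ^ m + q - 1)

/-!
On an LCD code the Hermitian form is nondegenerate. As `x ↦ x ^ q` is not the identity, a
nonzero Hermitian form has an anisotropic vector `v`, and the code splits as `K v ⊕ W` with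
`W = v^⊥` again nondegenerate. For `c = w + l v` one has `⟨c,c⟩ = ⟨w,w⟩ + l^(q+1) ⟨v,v⟩`, and
the norm `l ↦ l^(q+1)` takes every nonzero value of `F_q` exactly `q + 1` times (the roots of
`X^(q+1) - b` are among the `q²` distinct roots of `X^(q²) - X`). So an isotropic `w` lifts to one
isotropic `c` and an anisotropic `w` to `q + 1` of them, giving `A(k+1) + q A(k) = (q+1) q^(2k)`
for the number `A(k)` of isotropic vectors in dimension `k`; `N₀` solves this recursion.
-/

namespace LinearMap

variable {K V : Type*} [Field K] [AddCommGroup V] [Module K V]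

def kerProdEquivOfApplyNeZero (f : V →ₗ[K] K) {v : V} (hv : f v ≠ 0) : (ker f × K) ≃ₗ[K] V where
  toFun p := p.1 + p.2 • v
  invFun x := (⟨x - (f x / f v) • v, by simp [hv]⟩, f x / f v)
  map_add' p p' := by simp only [Prod.fst_add, Prod.snd_add, Submodule.coe_add, add_smul]; abel
  map_smul' c p := by simp [smul_add, smul_smul]
  left_inv p := by
    obtain ⟨⟨w, hw⟩, l⟩ := p
    ext <;> simp [mem_ker.1 hw, hv]
  right_inv x := by simp

variable {σ : K →+* K} {B : V →ₛₗ[σ] V →ₗ[K] K}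

theorem exists_apply_self_ne_zero (hσ : ∃ μ, σ μ ≠ μ) (hB0 : B ≠ 0) :
    ∃ v, B v v ≠ 0 := by
  by_contra! hiso
  obtain ⟨μ, hμ⟩ := hσ
  have polar : ∀ x y, B x y + B y x = 0 := fun x y => by
    have h := hiso (x + y)
    simp only [map_add, add_apply, hiso x, hiso y] at h
    linear_combination h
  refine hB0 (ext₂ fun x y => ?_)
  have h := polar (μ • x) y
  rw [map_smulₛₗ₂, map_smul, smul_eq_mul, smul_eq_mul] at h
  have h' : (σ μ - μ) * B x y = 0 := by linear_combination h - μ * polar x y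
  simpa [sub_eq_zero, hμ] using h'

namespace IsSymm

variable (hB : B.IsSymm)
include hB

theorem apply_add_smul_self {v w : V} (hw : B v w = 0) (l : K) :
    B (w + l • v) (w + l • v) = B w w + σ l * l * B v v := by
  have hwv : B w v = 0 := by rw [← hB.eq, hw, map_zero]
  simp only [map_add, map_smulₛₗ, add_apply, smul_apply, smul_eq_mul, RingHom.id_apply, hw, hwv]
  ring

theorem separatingLeft_domRestrict_ker (hnd : B.SeparatingLeft) {v : V} (hv : B v v ≠ 0) :
    (B.domRestrict₁₂ (ker (B v)) (ker (B v))).SeparatingLeft := by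
  intro w hw
  ext1
  refine hnd w fun x => ?_
  obtain ⟨⟨w', l⟩, rfl⟩ := (kerProdEquivOfApplyNeZero (B v) hv).surjective x
  have hwv : B w v = 0 := by rw [← hB.eq, mem_ker.1 w.2, map_zero]
  simpa [kerProdEquivOfApplyNeZero, domRestrict₁₂_apply, hwv] using hw w'

end IsSymm
end LinearMap

theorem pow_sub_one_eq_one_of_pow_eq_self {G₀ : Type*} [GroupWithZero G₀] {b : G₀} {q : ℕ}
    (hq : q ≠ 0) (hb0 : b ≠ 0) (hb : b ^ q = b) : b ^ (q - 1) = 1 :=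
  mul_right_cancel₀ hb0 (by rw [pow_sub_one_mul hq, hb, one_mul])

namespace FiniteField

variable {K : Type*} [Field K] [Fintype K]

open Polynomial in
theorem card_nthRootsFinset_of_pow_eq_one {d e : ℕ} (hde : d * e = Fintype.card K - 1) {b : K}
    (hb : b ^ e = 1) : (nthRootsFinset d b).card = d := by
  classical
  have hf0 : (X ^ Fintype.card K - X : K[X]) ≠ 0 :=
    X_pow_card_sub_X_ne_zero K Fintype.one_lt_card
  have hdvd : X ^ d - C b ∣ X ^ Fintype.card K - X := by
    have h : X ^ Fintype.card K - X = X * ((X ^ d) ^ e - C b ^ e) := by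
      rw [← C_pow, hb, C_1, ← pow_mul, hde, mul_sub, mul_one, ← pow_succ',
        Nat.sub_add_cancel Fintype.card_pos]
    rw [h]
    exact (sub_dvd_pow_sub_pow _ _ e).mul_left X
  have hsplit : (X ^ d - C b : K[X]).Splits := by
    refine Splits.of_dvd ?_ hf0 hdvd
    rw [splits_iff_card_roots, roots_X_pow_card_sub_X,
      X_pow_card_sub_X_natDegree_eq K Fintype.one_lt_card]
    rfl
  have hnodup : (nthRoots d b).Nodup := by
    refine Multiset.nodup_of_le (roots.le_of_dvd hf0 hdvd) ?_
    rw [roots_X_pow_card_sub_X]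
    exact Finset.univ.nodup
  rw [nthRootsFinset, Multiset.toFinset_card_of_nodup hnodup, nthRoots,
    splits_iff_card_roots.1 hsplit, natDegree_X_pow_sub_C]

variable {q : ℕ} (hK : Fintype.card K = q ^ 2)
include hK

theorem one_lt_of_card_eq_sq : 1 < q :=
  (Nat.one_lt_pow_iff two_ne_zero).1 (hK ▸ Fintype.one_lt_card)

theorem exists_pow_ne_self : ∃ μ : K, μ ^ q ≠ μ := by
  by_contra! h
  have hq := one_lt_of_card_eq_sq hK
  have hdvd : q ^ 2 - 1 ∣ q - 1 := by
    rw [← hK, ← forall_pow_eq_one_iff]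
    exact fun x => Units.ext <| by
      simpa using pow_sub_one_eq_one_of_pow_eq_self (by omega) x.ne_zero (h x)
  have := Nat.le_of_dvd (by omega) hdvd
  have : q ^ 2 ≤ q := by omega
  nlinarith

variable {σ : K →+* K} (hσ : ∀ x, σ x = x ^ q)
include hσ

theorem natCard_conj_mul_self_mul_add_eq_zero {α β : K} (hα : α ≠ 0) (hβ : β ≠ 0)
    (hασ : σ α = α) (hβσ : σ β = β) : Nat.card {l : K // σ l * l * α + β = 0} = q + 1 := by
  set b := -β / α
  have hb0 : b ≠ 0 := div_ne_zero (neg_ne_zero.2 hβ) hα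
  have hbσ : σ b = b := by simp only [b, map_div₀, map_neg, hασ, hβσ]
  have hiff : ∀ l, σ l * l * α + β = 0 ↔ l ∈ Polynomial.nthRootsFinset (q + 1) b := fun l => by
    rw [Polynomial.mem_nthRootsFinset q.succ_pos, hσ, ← pow_succ, eq_div_iff hα,
      eq_neg_iff_add_eq_zero]
  have hb : b ^ (q - 1) = 1 := pow_sub_one_eq_one_of_pow_eq_self
    (Nat.zero_lt_of_lt (one_lt_of_card_eq_sq hK)).ne' hb0 (hσ b ▸ hbσ)
  rw [Nat.card_congr (Equiv.subtypeEquivRight hiff), Nat.card_eq_finsetCard,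
    card_nthRootsFinset_of_pow_eq_one (by rw [hK, ← Nat.sq_sub_sq, one_pow]) hb]

end FiniteField

theorem N0_one (q : ℤ) : N0 q 1 = 1 := by
  simp [N0]

theorem N0_add_two (q : ℤ) (k : ℕ) :
    N0 q (k + 2) + q * N0 q (k + 1) = (q + 1) * q ^ (2 * (k + 1)) := by
  rcases Nat.even_or_odd k with hk | hk
  · simp only [N0, Nat.odd_add_one, Nat.not_odd_iff_even, hk, not_true_eq_false, if_false,
      if_true, Nat.add_sub_cancel, show k + 2 - 1 = k + 1 from rfl]
    ring
  · simp only [N0, Nat.odd_add_one, hk, not_true_eq_false, not_false_eq_true, if_false,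
      if_true, Nat.add_sub_cancel, show k + 2 - 1 = k + 1 from rfl]
    ring

namespace LinearMap.IsSymm

variable {K V : Type*} [Field K] [Fintype K] [AddCommGroup V] [Module K V] {σ : K →+* K}
  {B : V →ₛₗ[σ] V →ₗ[K] K} {q : ℕ} (hK : Fintype.card K = q ^ 2) (hσ : ∀ x, σ x = x ^ q)
include hK hσ

theorem natCard_isotropic_add_mul [Finite V] (hB : B.IsSymm) {v : V} (hv : B v v ≠ 0) :
    Nat.card {x : V // B x x = 0} + q * Nat.card {w : ker (B v) // B w w = 0} =
      (q + 1) * Nat.card (ker (B v)) := by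
  classical
  have := Fintype.ofFinite (ker (B v))
  have hsum : Nat.card {x : V // B x x = 0} =
      ∑ w : ker (B v), Nat.card {l : K // σ l * l * B v v + B w w = 0} := by
    rw [← Nat.card_sigma, ← Nat.card_congr (Equiv.subtypeProdEquivSigmaSubtype
      fun (w : ker (B v)) (l : K) => σ l * l * B v v + B w w = 0)]
    refine Nat.card_congr
      ((kerProdEquivOfApplyNeZero (B v) hv).toEquiv.subtypeEquiv fun p => ?_).symm
    change _ ↔ B (p.1 + p.2 • v) (p.1 + p.2 • v) = 0
    rw [hB.apply_add_smul_self (mem_ker.1 p.1.2), add_comm]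
  have hfibre : ∀ w : ker (B v), Nat.card {l : K // σ l * l * B v v + B w w = 0} +
      q * (if B w w = 0 then 1 else 0) = q + 1 := by
    intro w
    by_cases hw : B w w = 0
    · simp [hw, hv, add_comm]
    · rw [FiniteField.natCard_conj_mul_self_mul_add_eq_zero hK hσ hv hw (hB.eq v v) (hB.eq w w),
        if_neg hw, mul_zero, add_zero]
  rw [hsum, Nat.card_eq_fintype_card, Fintype.card_subtype, Finset.card_filter, Finset.mul_sum,
    ← Finset.sum_add_distrib, Finset.sum_congr rfl fun w _ => hfibre w, Nat.card_eq_fintype_card,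
    Finset.sum_const, Finset.card_univ, smul_eq_mul, mul_comm]

theorem exists_natCard_isotropic_add_mul [FiniteDimensional K V] (hB : B.IsSymm)
    (hnd : B.SeparatingLeft) {k : ℕ} (hV : Module.finrank K V = k + 1) :
    ∃ W : Submodule K V, Module.finrank K W = k ∧ (B.domRestrict₁₂ W W).IsSymm ∧
      (B.domRestrict₁₂ W W).SeparatingLeft ∧
      Nat.card {x : V // B x x = 0} + q * Nat.card {w : W // B w w = 0} =
        (q + 1) * q ^ (2 * k) := by
  have : Nontrivial V := Module.nontrivial_of_finrank_eq_succ hV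
  obtain ⟨v, hv⟩ := exists_apply_self_ne_zero
    (by simpa [hσ] using FiniteField.exists_pow_ne_self hK) hnd.ne_zero
  have hW : Module.finrank K (ker (B v)) = k := by
    have := Module.Dual.finrank_ker_add_one_of_ne_zero (f := B v) fun h => hv (by simp [h])
    omega
  have : Finite V := Module.finite_of_finite K
  refine ⟨ker (B v), hW, hB.domRestrict _, hB.separatingLeft_domRestrict_ker hnd hv, ?_⟩
  rw [natCard_isotropic_add_mul hK hσ hB hv, Module.natCard_eq_pow_finrank (K := K), hW,
    Nat.card_eq_fintype_card, hK, ← pow_mul]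

theorem natCard_isotropic_eq_N0 [FiniteDimensional K V] (hB : B.IsSymm)
    (hnd : B.SeparatingLeft) {k : ℕ} (hV : Module.finrank K V = k + 1) :
    (Nat.card {x : V // B x x = 0} : ℤ) = N0 q (k + 1) := by
  induction k generalizing V with
  | zero =>
    obtain ⟨W, hW, -, -, hcard⟩ := hB.exists_natCard_isotropic_add_mul hK hσ hnd hV
    have : Subsingleton W := Module.finrank_zero_iff.1 hW
    have : Nonempty {w : W // B w w = 0} := ⟨0, by simp⟩
    rw [Nat.card_unique (α := {w : W // B w w = 0}), mul_zero, pow_zero] at hcard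
    rw [N0_one]
    omega
  | succ k ih =>
    obtain ⟨W, hW, hBW, hndW, hcard⟩ := hB.exists_natCard_isotropic_add_mul hK hσ hnd hV
    have hW' := ih hBW hndW hW
    simp only [domRestrict₁₂_apply] at hW'
    zify at hcard
    linear_combination hcard - q * hW' - N0_add_two q k

end LinearMap.IsSymm

section Hermitian

variable {K : Type*} [Field K] {n : ℕ}

/-- `hermForm σ x y = hermInner σ y x`: Mathlib's sesquilinear forms are semilinear in the first
argument. -/
def hermForm (σ : K →+* K) : (Fin n → K) →ₛₗ[σ] (Fin n → K) →ₗ[K] K :=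
  LinearMap.mk₂'ₛₗ σ (RingHom.id K) (fun x y => hermInner σ y x)
    (fun x x' y => by simp [hermInner, mul_add, Finset.sum_add_distrib])
    (fun c x y => by simp [hermInner, Finset.mul_sum, mul_left_comm])
    (fun x y y' => by simp [hermInner, add_mul, Finset.sum_add_distrib])
    (fun c x y => by simp [hermInner, Finset.mul_sum, mul_assoc])

theorem hermForm_isSymm {σ : K →+* K} (hσ : ∀ x, σ (σ x) = x) :
    (hermForm (n := n) σ).IsSymm :=
  ⟨fun x y => by simp [hermForm, hermInner, hσ, mul_comm]⟩

end Hermitian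

theorem card_selfOrthogonal_codewords_of_hermitianLCD_general
    (q : ℕ)
    {K : Type*} [Field K] [Fintype K] (hK : Fintype.card K = q ^ 2)
    (σ : K →+* K) (hσ : ∀ x : K, σ x = x ^ q)
    (n k : ℕ) (hk : 0 < k)
    (C : Submodule K (Fin n → K)) (hC : Module.finrank K C = k)
    (hLCD : C ⊓ hermDual σ C = ⊥) :
    (Nat.card {c : Fin n → K // c ∈ C ∧ hermInner σ c c = 0} : ℤ) = N0 q k := by
  obtain ⟨k, rfl⟩ := Nat.exists_eq_add_one_of_ne_zero hk.ne'
  have hσσ : ∀ x, σ (σ x) = x := fun x => by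
    rw [hσ, hσ, ← pow_mul, ← sq, ← hK, FiniteField.pow_card]
  have hsep : ((hermForm σ).domRestrict₁₂ C C).SeparatingLeft := fun x hx => by
    have hx' : (x : Fin n → K) ∈ C ⊓ hermDual σ C := ⟨x.2, fun y hy => hx ⟨y, hy⟩⟩
    rw [hLCD] at hx'
    exact Subtype.ext ((Submodule.mem_bot K).1 hx')
  rw [← ((hermForm_isSymm hσσ).domRestrict C).natCard_isotropic_eq_N0 hK hσ hsep hC]
  exact congrArg _ (Nat.card_congr (Equiv.subtypeSubtypeEquivSubtypeInter _ _).symm)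

/-- A Hermitian LCD `[n,k]_{q²}` code has exactly `N₀^{q+1}(k)` Hermitian
self-orthogonal codewords. -/
theorem card_selfOrthogonal_codewords_of_hermitianLCD
    (q : ℕ) (hq : IsPrimePow q)
    {K : Type*} [Field K] [Fintype K] (hK : Fintype.card K = q ^ 2)
    (σ : K →+* K) (hσ : ∀ x : K, σ x = x ^ q)
    (n k : ℕ) (hk : 0 < k)
    (C : Submodule K (Fin n → K)) (hC : Module.finrank K C = k)
    (hLCD : C ⊓ hermDual σ C = ⊥) :
    (Nat.card {c : Fin n → K // c ∈ C ∧ hermInner σ c c = 0} : ℤ) = N0 q k :=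
  card_selfOrthogonal_codewords_of_hermitianLCD_general q hK σ hσ n k hk C hC hLCD
end
end

section
/- Let q be a prime power and let C be a symplectic LCD [2n,k]_q code. Then k is even and there exist a generator matrix G of C and a generator matrix H of C^{⊥s} such that the 2n×2n matrix M obtained by stacking G on top of H satisfies M Ω_n Mᵀ = diag(J₂, J₂, …, J₂) (n blocks), where J₂ = [[0,1],[−1,0]]. -/
open scoped BigOperators
open Matrix

noncomputable section

/-- The symplectic inner product `⟨x,y⟩_s = ∑_{i=1}^n (x_i y_{n+i} - x_{n+i} y_i)` on `K^{2n}`. -/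
def sympInner {K : Type*} [Field K] (n : ℕ) (x y : Fin (2 * n) → K) : K :=
  ∑ i : Fin n,
    (x ⟨i.1, by have := i.2; omega⟩ * y ⟨n + i.1, by have := i.2; omega⟩ -
      x ⟨n + i.1, by have := i.2; omega⟩ * y ⟨i.1, by have := i.2; omega⟩)

/-- The symplectic dual `C^{⊥s}` of a code `C ⊆ K^{2n}`. -/
def sympDual {K : Type*} [Field K] (n : ℕ) (C : Submodule K (Fin (2 * n) → K)) :
    Submodule K (Fin (2 * n) → K) where
  carrier := {y | ∀ x ∈ C, sympInner n x y = 0}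
  zero_mem' := by
    intro x hx
    simp [sympInner]
  add_mem' := by
    intro y z hy hz x hx
    have h1 := hy x hx
    have h2 := hz x hx
    simp only [sympInner, Pi.add_apply] at h1 h2 ⊢
    calc (∑ i : Fin n, _) = (∑ i : Fin n,
          (x ⟨i.1, by have := i.2; omega⟩ * y ⟨n + i.1, by have := i.2; omega⟩ -
            x ⟨n + i.1, by have := i.2; omega⟩ * y ⟨i.1, by have := i.2; omega⟩)) +
        ∑ i : Fin n,
          (x ⟨i.1, by have := i.2; omega⟩ * z ⟨n + i.1, by have := i.2; omega⟩ -
            x ⟨n + i.1, by have := i.2; omega⟩ * z ⟨i.1, by have := i.2; omega⟩) := by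
          rw [← Finset.sum_add_distrib]
          exact Finset.sum_congr rfl fun i _ => by ring
      _ = 0 := by rw [h1, h2, add_zero]
  smul_mem' := by
    intro c y hy x hx
    have h := hy x hx
    simp only [sympInner, Pi.smul_apply, smul_eq_mul] at h ⊢
    calc (∑ i : Fin n, _) = c * ∑ i : Fin n,
          (x ⟨i.1, by have := i.2; omega⟩ * y ⟨n + i.1, by have := i.2; omega⟩ -
            x ⟨n + i.1, by have := i.2; omega⟩ * y ⟨i.1, by have := i.2; omega⟩) := by
          rw [Finset.mul_sum]
          exact Finset.sum_congr rfl fun i _ => by ring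
      _ = 0 := by rw [h, mul_zero]

/-- The matrix `Ω_n = [[O, I_n], [-I_n, O]]` defining the symplectic inner product. -/
def sympOmega (n : ℕ) (K : Type*) [Field K] : Matrix (Fin (2 * n)) (Fin (2 * n)) K :=
  Matrix.of fun i j => if j.1 = i.1 + n then 1 else if i.1 = j.1 + n then -1 else 0

/-- The block diagonal matrix `diag(J₂, …, J₂)` (with `J₂ = [[0,1],[-1,0]]`) of size `N`. -/
def jayBlocks (N : ℕ) (K : Type*) [Field K] : Matrix (Fin N) (Fin N) K :=
  Matrix.of fun i j =>
    if i.1 % 2 = 0 ∧ j.1 = i.1 + 1 then 1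
    else if j.1 % 2 = 0 ∧ i.1 = j.1 + 1 then -1 else 0

/-!
The symplectic form is `x ⬝ᵥ Ω y` with `Ω` conjugate to `-J`, hence alternating and nondegenerate.
If an alternating form is nondegenerate on a subspace `W ≠ 0`, pick `e, f ∈ W` with `B e f = 1`:
the vectors of `W` orthogonal to `e` and `f` complement `span {e, f}` in `W` and the form is again
nondegenerate on them, so induction on `dim W` gives a family spanning `W` with Gram matrix
`diag(J₂, …, J₂)`. That Gram matrix is invertible, so the family is a basis and `dim W` is even.
For an LCD code this applies to `C` and, since `(C^⊥s)^⊥s = C`, to `C^⊥s`; stacking the two bases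
gives `M`, whose Gram matrix is block diagonal because `C ⊥ C^⊥s` and `k` is even.
-/

theorem Fin.range_append {α : Type*} {m n : ℕ} (a : Fin m → α) (b : Fin n → α) :
    Set.range (Fin.append a b) = Set.range a ∪ Set.range b := by
  rw [← Set.Sum.elim_range, ← Fin.append_comp_sumElim, Set.range_comp,
    show Set.range (Sum.elim (castAdd n) (natAdd m)) = Set.univ from finSumFinEquiv.range_eq_univ,
    Set.image_univ]

namespace LinearMap.BilinForm

variable {K V : Type*} [Field K] [AddCommGroup V] [Module K V] {B : LinearMap.BilinForm K V}

def IsSymplecticFamily (B : LinearMap.BilinForm K V) {d : ℕ} (b : Fin d → V) : Prop :=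
  ∀ i j, B (b i) (b j) = jayBlocks d K i j

theorem IsSymplecticFamily.linearIndependent {d : ℕ} {b : Fin d → V} (hb : B.IsSymplecticFamily b)
    (hd : Even d) : LinearIndependent K b := by
  rw [Fintype.linearIndependent_iff]
  intro g hg i
  have hcol : ∀ j, ∑ l, g l * jayBlocks d K l j = 0 := fun j => by
    simpa only [map_sum, map_smul, LinearMap.sum_apply, LinearMap.smul_apply, smul_eq_mul, hb _ j,
      map_zero, LinearMap.zero_apply] using congrArg (B · (b j)) hg
  obtain ⟨r, rfl⟩ := hd
  -- Pairing with the partner `b (i ± 1)` of `b i` isolates the coefficient `g i`.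
  rcases Nat.even_or_odd i.1 with ⟨s, hs⟩ | ⟨s, hs⟩
  · have h := hcol ⟨i + 1, by omega⟩
    rwa [Fintype.sum_eq_single i fun l hl => ?_, jayBlocks, of_apply, if_pos ⟨by omega, rfl⟩,
      mul_one] at h
    have := Fin.val_ne_of_ne hl
    rw [jayBlocks, of_apply, if_neg (by simp only; omega), if_neg (by simp only; omega), mul_zero]
  · have h := hcol ⟨i - 1, by omega⟩
    rwa [Fintype.sum_eq_single i fun l hl => ?_, jayBlocks, of_apply, if_neg (by omega),
      if_pos ⟨by simp only; omega, by simp only; omega⟩, mul_neg_one, neg_eq_zero] at h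
    have := Fin.val_ne_of_ne hl
    rw [jayBlocks, of_apply, if_neg (by simp only; omega), if_neg (by simp only; omega), mul_zero]

theorem IsSymplecticFamily.append {k m : ℕ} {b₁ : Fin k → V} {b₂ : Fin m → V} (hB : B.IsRefl)
    (hk : Even k) (h₁ : B.IsSymplecticFamily b₁) (h₂ : B.IsSymplecticFamily b₂)
    (h₁₂ : ∀ i j, B (b₁ i) (b₂ j) = 0) : B.IsSymplecticFamily (Fin.append b₁ b₂) := by
  obtain ⟨r, rfl⟩ := hk
  intro i j
  induction i using Fin.addCases <;> induction j using Fin.addCases <;>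
    simp only [Fin.append_left, Fin.append_right, h₁ _ _, h₂ _ _, h₁₂, hB _ _ (h₁₂ _ _)] <;>
    simp only [jayBlocks, of_apply, Fin.val_castAdd, Fin.val_natAdd] <;>
    split_ifs <;> first | rfl | omega

theorem isSymplecticFamily_pair (hB : B.IsAlt) {e f : V} (hef : B e f = 1) :
    B.IsSymplecticFamily ![e, f] := by
  intro i j
  fin_cases i <;> fin_cases j <;> simp [jayBlocks, hB.self_eq_zero, hef, ← hB.neg_eq e f]

theorem exists_mem_mem_eq_one {W : Submodule K V} (hW : W ⊓ B.orthogonal W = ⊥) (hW₀ : W ≠ ⊥) :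
    ∃ e ∈ W, ∃ f ∈ W, B e f = 1 := by
  obtain ⟨f, hfW, hf₀⟩ := Submodule.exists_mem_ne_zero_of_ne_bot hW₀
  have hf : f ∉ B.orthogonal W := fun h => hf₀ <| (Submodule.mem_bot K).1 <| hW ▸ ⟨hfW, h⟩
  obtain ⟨e, heW, hef⟩ : ∃ e ∈ W, B e f ≠ 0 := by simpa [mem_orthogonal_iff] using hf
  exact ⟨(B e f)⁻¹ • e, W.smul_mem _ heW, f, hfW, by simp [hef]⟩

theorem span_pair_sup_inf_ker_eq (hB : B.IsAlt) {W : Submodule K V} {e f : V} (he : e ∈ W)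
    (hf : f ∈ W) (hef : B e f = 1) :
    Submodule.span K {e, f} ⊔ (W ⊓ (LinearMap.ker (B e) ⊓ LinearMap.ker (B f))) = W := by
  refine le_antisymm (sup_le ?_ inf_le_left) fun w hw => ?_
  · simp [Submodule.span_le, Set.insert_subset_iff, he, hf]
  have hfe : B f e = -1 := by rw [← hB.neg_eq, hef]
  refine Submodule.mem_sup.2 ⟨B e w • f - B f w • e, ?_, w - (B e w • f - B f w • e), ?_, by abel⟩
  · exact sub_mem (Submodule.smul_mem _ _ (Submodule.subset_span (by simp)))
      (Submodule.smul_mem _ _ (Submodule.subset_span (by simp)))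
  · refine ⟨W.sub_mem hw (W.sub_mem (W.smul_mem _ hf) (W.smul_mem _ he)), ?_, ?_⟩ <;>
      simp [hef, hfe, hB.self_eq_zero]

theorem ker_inf_ker_le_orthogonal_span_pair (e f : V) :
    LinearMap.ker (B e) ⊓ LinearMap.ker (B f) ≤ B.orthogonal (Submodule.span K {e, f}) := by
  rintro x ⟨hex, hfx⟩ p hp
  obtain ⟨a, b, rfl⟩ := Submodule.mem_span_pair.1 hp
  simp_all

theorem inf_orthogonal_eq_bot_of_le_orthogonal {P Q : Submodule K V} (hPQ : Q ≤ B.orthogonal P)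
    (hW : (P ⊔ Q) ⊓ B.orthogonal (P ⊔ Q) = ⊥) : Q ⊓ B.orthogonal Q = ⊥ := by
  rw [eq_bot_iff, ← hW]
  rintro x ⟨hxQ, hxQ'⟩
  refine ⟨Submodule.mem_sup_right hxQ, mem_orthogonal_iff.2 fun w hw => ?_⟩
  obtain ⟨p, hp, q, hq, rfl⟩ := Submodule.mem_sup.1 hw
  simp [hPQ hxQ p hp, hxQ' q hq]

theorem exists_isSymplecticFamily [FiniteDimensional K V] (hB : B.IsAlt) (W : Submodule K V)
    (hW : W ⊓ B.orthogonal W = ⊥) :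
    ∃ d, Even d ∧ ∃ b : Fin d → V, B.IsSymplecticFamily b ∧ Submodule.span K (Set.range b) = W := by
  induction hr : Module.finrank K W using Nat.strong_induction_on generalizing W with
  | _ r ih =>
  rcases eq_or_ne W ⊥ with rfl | hW₀
  · exact ⟨0, Even.zero, Fin.elim0, fun i => i.elim0, by simp⟩
  obtain ⟨e, he, f, hf, hef⟩ := exists_mem_mem_eq_one hW hW₀
  set Q := W ⊓ (LinearMap.ker (B e) ⊓ LinearMap.ker (B f))
  have hsup : Submodule.span K {e, f} ⊔ Q = W := span_pair_sup_inf_ker_eq hB he hf hef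
  have hQ : Q ⊓ B.orthogonal Q = ⊥ :=
    inf_orthogonal_eq_bot_of_le_orthogonal
      (inf_le_right.trans (ker_inf_ker_le_orthogonal_span_pair e f))
      (hsup ▸ hW)
  have hQW : Q < W := by
    refine lt_of_le_of_ne inf_le_left fun h => ?_
    have : B f e = 0 := (h ▸ he).2.2
    rw [← hB.neg_eq, hef] at this
    exact one_ne_zero (neg_eq_zero.1 this)
  obtain ⟨d, hd, b, hb, hspan⟩ := ih _ (hr ▸ Submodule.finrank_lt_finrank_of_lt hQW) Q hQ rfl
  refine ⟨2 + d, even_two.add hd, Fin.append ![e, f] b,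
    (isSymplecticFamily_pair hB hef).append hB.isRefl even_two hb fun i j => ?_, ?_⟩
  · have hbj : b j ∈ Q := hspan ▸ Submodule.subset_span ⟨j, rfl⟩
    fin_cases i
    exacts [hbj.2.1, hbj.2.2]
  · rw [Fin.range_append, Submodule.span_union, Matrix.range_cons_cons_empty, hspan, hsup]

theorem exists_isSymplecticFamily_of_finrank_eq [FiniteDimensional K V] (hB : B.IsAlt)
    {W : Submodule K V} (hW : W ⊓ B.orthogonal W = ⊥) {d : ℕ} (hd : Module.finrank K W = d) :
    Even d ∧ ∃ b : Fin d → V, LinearIndependent K b ∧ Submodule.span K (Set.range b) = W ∧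
      B.IsSymplecticFamily b := by
  obtain ⟨d', hd', b, hb, hspan⟩ := exists_isSymplecticFamily hB W hW
  have hli := hb.linearIndependent hd'
  obtain rfl : d = d' := by rw [← hd, ← hspan, finrank_span_eq_card hli, Fintype.card_fin]
  exact ⟨hd', b, hli, hspan, hb⟩

end LinearMap.BilinForm

theorem Matrix.mul_mul_transpose_apply {R m n : Type*} [CommSemiring R] [Fintype n] [DecidableEq n]
    (M : Matrix m n R) (A : Matrix n n R) (i j : m) :
    (M * A * Mᵀ) i j = Matrix.toLinearMap₂' R A (M i) (M j) := by
  rw [toLinearMap₂'_apply', dotProduct_mulVec]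
  rfl

theorem Matrix.of_fromRows_symm_apply {α ι : Type*} {k m N : ℕ} (h : k + m = N)
    (b₁ : Fin k → ι → α) (b₂ : Fin m → ι → α) (i : Fin N) :
    (Matrix.of fun i j => Matrix.fromRows (of b₁) (of b₂)
      ((finSumFinEquiv.trans (finCongr h)).symm i) j) i = Fin.append b₁ b₂ (Fin.cast h.symm i) := by
  obtain ⟨s, rfl⟩ := (finSumFinEquiv.trans (finCongr h)).surjective i
  rcases s with a | a <;> ext j <;> simp

def sumFinTwoMul (n : ℕ) : Fin n ⊕ Fin n ≃ Fin (2 * n) :=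
  finSumFinEquiv.trans (finCongr (two_mul n).symm)

def sympForm (n : ℕ) (K : Type*) [Field K] : LinearMap.BilinForm K (Fin (2 * n) → K) :=
  Matrix.toLinearMap₂' K (sympOmega n K)

section SymplecticForm

variable {K : Type*} [Field K] (n : ℕ)

theorem sympInner_eq_sum (x y : Fin (2 * n) → K) :
    sympInner n x y = ∑ i, (x (sumFinTwoMul n (.inl i)) * y (sumFinTwoMul n (.inr i)) -
      x (sumFinTwoMul n (.inr i)) * y (sumFinTwoMul n (.inl i))) := rfl

theorem sympOmega_eq_reindex :
    sympOmega n K = reindex (sumFinTwoMul n) (sumFinTwoMul n) (-J (Fin n) K) := by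
  rw [← Equiv.symm_apply_eq, reindex_symm]
  ext (i | i) (j | j) <;>
    simp only [reindex_apply, Equiv.symm_symm, submatrix_apply, sumFinTwoMul, Equiv.trans_apply,
      finSumFinEquiv_apply_left, finSumFinEquiv_apply_right, finCongr_apply, sympOmega, of_apply,
      Fin.val_cast, Fin.val_castAdd, Fin.val_natAdd, J, Matrix.neg_apply, fromBlocks_apply₁₁,
      fromBlocks_apply₁₂, fromBlocks_apply₂₁, fromBlocks_apply₂₂, Matrix.zero_apply, one_apply,
      Fin.ext_iff] <;>
    split_ifs <;> first | omega | simp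

theorem sympForm_apply (x y : Fin (2 * n) → K) : sympForm n K x y = sympInner n x y := by
  simp [sympForm, toLinearMap₂'_apply', sympInner_eq_sum, dotProduct, mulVec, sympOmega_eq_reindex,
    ← (sumFinTwoMul n).sum_comp, Fintype.sum_sum_type, J, one_apply, sub_eq_add_neg,
    Finset.sum_add_distrib, mul_comm]

theorem sympForm_isAlt : (sympForm n K).IsAlt := fun x => by
  rw [sympForm_apply]
  exact Finset.sum_eq_zero fun i _ => by ring

theorem sympForm_nondegenerate : (sympForm n K).Nondegenerate := by
  refine LinearMap.nondegenerate_toLinearMap₂'_of_det_ne_zero' ?_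
  rw [sympOmega_eq_reindex, det_reindex_self, det_neg]
  exact ((isUnit_neg_one.pow _).mul (isUnit_det_J _ _)).ne_zero

theorem sympDual_eq_orthogonal (C : Submodule K (Fin (2 * n) → K)) :
    sympDual n C = (sympForm n K).orthogonal C := by
  ext y
  simp [LinearMap.BilinForm.mem_orthogonal_iff, sympForm_apply, sympDual]

end SymplecticForm

/-- If `C` is a symplectic LCD `[2n,k]_q` code, then `k` is even and
there are generator matrices `G` of `C` and `H` of `C^{⊥s}` such that the stacked matrix
`M = (G over H)` satisfies `M Ω_n Mᵀ = diag(J₂, …, J₂)` (`n` blocks). -/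
theorem symplecticLCD_generator_matrices
    {K : Type*} [Field K]
    (n k : ℕ) (hkn : k ≤ 2 * n)
    (C : Submodule K (Fin (2 * n) → K)) (hC : Module.finrank K C = k)
    (hLCD : C ⊓ sympDual n C = ⊥) :
    Even k ∧
      ∃ (G : Matrix (Fin k) (Fin (2 * n)) K) (H : Matrix (Fin (2 * n - k)) (Fin (2 * n)) K),
        (LinearIndependent K fun i : Fin k => G i) ∧
        Submodule.span K (Set.range fun i : Fin k => G i) = C ∧
        (LinearIndependent K fun i : Fin (2 * n - k) => H i) ∧
        Submodule.span K (Set.range fun i : Fin (2 * n - k) => H i) = sympDual n C ∧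
        ∃ M : Matrix (Fin (2 * n)) (Fin (2 * n)) K,
          M = (Matrix.of fun i j => Matrix.fromRows G H
              ((finSumFinEquiv.trans (finCongr (by omega : k + (2 * n - k) = 2 * n))).symm i) j) ∧
          M * sympOmega n K * Mᵀ = jayBlocks (2 * n) K := by
  set B := sympForm n K
  have hB : B.IsAlt := sympForm_isAlt n
  rw [sympDual_eq_orthogonal] at hLCD ⊢
  have hLCD' : B.orthogonal C ⊓ B.orthogonal (B.orthogonal C) = ⊥ := by
    rw [LinearMap.BilinForm.orthogonal_orthogonal (sympForm_nondegenerate n) hB.isRefl, inf_comm,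
      hLCD]
  have hdim : Module.finrank K (B.orthogonal C) = 2 * n - k := by
    rw [LinearMap.BilinForm.finrank_orthogonal (sympForm_nondegenerate n), Module.finrank_fin_fun,
      hC]
  obtain ⟨hk, G, hGli, hGspan, hG⟩ :=
    LinearMap.BilinForm.exists_isSymplecticFamily_of_finrank_eq hB hLCD hC
  obtain ⟨-, H, hHli, hHspan, hH⟩ :=
    LinearMap.BilinForm.exists_isSymplecticFamily_of_finrank_eq hB hLCD' hdim
  have hGH : ∀ a b, B (G a) (H b) = 0 := fun a b =>
    (hHspan ▸ Submodule.subset_span ⟨b, rfl⟩ : H b ∈ B.orthogonal C) _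
      (hGspan ▸ Submodule.subset_span ⟨a, rfl⟩)
  refine ⟨hk, Matrix.of G, Matrix.of H, hGli, hGspan, hHli, hHspan, _, rfl, ?_⟩
  ext i j
  rw [mul_mul_transpose_apply, of_fromRows_symm_apply, of_fromRows_symm_apply]
  exact hG.append hB.isRefl hk hH hGH _ _
end
end

section
/- Let q be a prime power and let C be a symplectic LCD [2n,2k]_q code. Let G be a generator matrix of C and H be a generator matrix of C^{⊥s}, and let M be the 2n×2n matrix obtained by stacking G on top of H (M is invertible since C ⊕ C^{⊥s} = F_q^{2n}). Then a matrix Q belongs to the stabilizer St_s(C) = {Q ∈ Sp¹_{2n}(q) : CQ = C} if and only if Q = M⁻¹ · diag(Q₁, Q₂) · M for some invertible 2k×2k matrix Q₁ and invertible (2n−2k)×(2n−2k) matrix Q₂ over F_q satisfying Q₁(G Ω_n Gᵀ)Q₁ᵀ = G Ω_n Gᵀ and Q₂(H Ω_n Hᵀ)Q₂ᵀ = H Ω_n Hᵀ. -/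
/-!
Let `M` be the matrix whose rows are those of `G` followed by those of `H`. Then
`Q = M⁻¹ diag(Q₁, Q₂) M` says exactly that `G Q = Q₁ G` and `H Q = Q₂ H`. A symplectic `Q` with
`CQ = C` also maps `C^{⊥s}` into itself, so both relations hold for some `Q₁`, `Q₂`. These are
invertible because `Q` is and the rows of `G` and `H` are independent, and they preserve the
Gram matrices because `(GQ) Ω (GQ)ᵀ = G Ω Gᵀ`. Conversely, `G Ω Hᵀ = 0`, so `M Ω Mᵀ` is block
diagonal and the Gram conditions give `M (Q Ω Qᵀ) Mᵀ = M Ω Mᵀ`; cancel the invertible `M`.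
-/

open scoped BigOperators
open Matrix

noncomputable section

section RowSpan

variable {K : Type*} [Field K] {m N N' : Type*} [Fintype m]

theorem map_vecMulLinear_span_range_row [Fintype N] (A : Matrix m N K) (Q : Matrix N N' K) :
    (Submodule.span K (Set.range A.row)).map Q.vecMulLinear =
      Submodule.span K (Set.range (A * Q).row) := by
  rw [← range_vecMulLinear, ← range_vecMulLinear, ← LinearMap.range_comp]
  exact congrArg LinearMap.range (LinearMap.ext fun u => vecMul_vecMul u A Q)

theorem span_range_row_mul_of_isUnit [DecidableEq m] {P : Matrix m m K} (hP : IsUnit P)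
    (A : Matrix m N K) :
    Submodule.span K (Set.range (P * A).row) = Submodule.span K (Set.range A.row) := by
  rw [← range_vecMulLinear, ← range_vecMulLinear,
    show (P * A).vecMulLinear = A.vecMulLinear ∘ₗ P.vecMulLinear from
      LinearMap.ext fun u => (vecMul_vecMul u P A).symm,
    LinearMap.range_comp_of_range_eq_top]
  exact LinearMap.range_eq_top.mpr (vecMul_surjective_iff_isUnit.mpr hP)

theorem exists_mul_eq_mul_of_map_le [Fintype N] {A : Matrix m N K} {Q : Matrix N N K}
    (h : (Submodule.span K (Set.range A.row)).map Q.vecMulLinear ≤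
      Submodule.span K (Set.range A.row)) :
    ∃ P : Matrix m m K, A * Q = P * A := by
  rw [map_vecMulLinear_span_range_row, ← range_vecMulLinear A] at h
  choose P hP using fun i => h (Submodule.subset_span (Set.mem_range_self (f := (A * Q).row) i))
  exact ⟨Matrix.of P, funext fun i => by rw [mul_apply_eq_vecMul]; exact (hP i).symm⟩

theorem isUnit_of_mul_eq_mul [Fintype N] [DecidableEq m] [DecidableEq N] {A : Matrix m N K}
    {P : Matrix m m K} {Q : Matrix N N K} (hA : LinearIndependent K A.row) (hQ : IsUnit Q)
    (h : A * Q = P * A) : IsUnit P := by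
  refine vecMul_injective_iff_isUnit.mp fun u v huv => vecMul_injective_iff.mpr hA ?_
  apply vecMul_injective_of_isUnit hQ
  simp only at huv ⊢
  rw [vecMul_vecMul, vecMul_vecMul, h, ← vecMul_vecMul, ← vecMul_vecMul]
  exact congrArg (· ᵥ* A) huv

end RowSpan

section Congruence

variable {R : Type*} [CommRing R] {m p N : Type*} [Fintype N]

theorem mul_mul_mul_transpose_of_mul_eq_mul [Fintype m] [Fintype p] {A : Matrix m N R}
    {B : Matrix p N R} {P : Matrix m m R} {P' : Matrix p p R} {Q : Matrix N N R}
    (hA : A * Q = P * A) (hB : B * Q = P' * B) (S : Matrix N N R) :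
    P * (A * S * Bᵀ) * P'ᵀ = A * (Q * S * Qᵀ) * Bᵀ :=
  calc P * (A * S * Bᵀ) * P'ᵀ = (P * A) * S * (P' * B)ᵀ := by
        simp only [transpose_mul, Matrix.mul_assoc]
    _ = (A * Q) * S * (B * Q)ᵀ := by rw [hA, hB]
    _ = A * (Q * S * Qᵀ) * Bᵀ := by simp only [transpose_mul, Matrix.mul_assoc]

theorem eq_nonsing_inv_mul_mul_iff [DecidableEq N] {M Q D : Matrix N N R} (hM : IsUnit M) :
    Q = M⁻¹ * D * M ↔ M * Q = D * M := by
  have hdet := (isUnit_iff_isUnit_det M).mp hM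
  constructor
  · rintro rfl
    rw [Matrix.mul_assoc, mul_nonsing_inv_cancel_left (h := hdet)]
  · intro h
    rw [Matrix.mul_assoc, ← h, nonsing_inv_mul_cancel_left (h := hdet)]

theorem submatrix_id_mul {l o : Type*} (X : Matrix l N R) (Y : Matrix N o R) (f : m → l) :
    X.submatrix f id * Y = (X * Y).submatrix f id :=
  rfl

variable (e : m ⊕ p ≃ N) (A : Matrix m N R) (B : Matrix p N R)

theorem submatrix_fromRows_mul_eq_mul_iff [Fintype m] [Fintype p] (Q : Matrix N N R)
    (Q₁ : Matrix m m R) (Q₂ : Matrix p p R) :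
    (fromRows A B).submatrix e.symm id * Q =
        (fromBlocks Q₁ 0 0 Q₂).submatrix e.symm e.symm * (fromRows A B).submatrix e.symm id ↔
      A * Q = Q₁ * A ∧ B * Q = Q₂ * B := by
  rw [submatrix_mul_equiv, submatrix_id_mul]
  have hinj : Function.Injective fun X : Matrix (m ⊕ p) N R => X.submatrix e.symm id :=
    (reindex e (Equiv.refl N)).injective
  refine hinj.eq_iff.trans ?_
  rw [fromRows_mul, fromBlocks_mul_fromRows, fromRows_ext_iff]
  simp

theorem submatrix_fromRows_mul_mul_transpose (S : Matrix N N R) :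
    (fromRows A B).submatrix e.symm id * S * ((fromRows A B).submatrix e.symm id)ᵀ =
      (fromBlocks (A * S * Aᵀ) (A * S * Bᵀ) (B * S * Aᵀ) (B * S * Bᵀ)).submatrix e.symm e.symm := by
  rw [transpose_submatrix, submatrix_id_mul, ← submatrix_mul _ _ _ id _ Function.bijective_id,
    transpose_fromRows, fromRows_mul, fromRows_mul_fromCols]

theorem submatrix_fromRows_mul_mul_transpose_eq_of_mul_eq_mul [Fintype m] [Fintype p]
    {Q S : Matrix N N R} {P : Matrix m m R} {P' : Matrix p p R}
    (hA : A * Q = P * A) (hB : B * Q = P' * B) (hAS : P * (A * S * Aᵀ) * Pᵀ = A * S * Aᵀ)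
    (hBS : P' * (B * S * Bᵀ) * P'ᵀ = B * S * Bᵀ) (hAB : A * S * Bᵀ = 0) (hBA : B * S * Aᵀ = 0) :
    (fromRows A B).submatrix e.symm id * (Q * S * Qᵀ) * ((fromRows A B).submatrix e.symm id)ᵀ =
      (fromRows A B).submatrix e.symm id * S * ((fromRows A B).submatrix e.symm id)ᵀ := by
  rw [submatrix_fromRows_mul_mul_transpose, submatrix_fromRows_mul_mul_transpose,
    ← mul_mul_mul_transpose_of_mul_eq_mul hA hA, ← mul_mul_mul_transpose_of_mul_eq_mul hA hB,
    ← mul_mul_mul_transpose_of_mul_eq_mul hB hA, ← mul_mul_mul_transpose_of_mul_eq_mul hB hB,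
    hAS, hBS, hAB, hBA, Matrix.mul_zero, Matrix.zero_mul, Matrix.mul_zero, Matrix.zero_mul]

end Congruence

section Symplectic

variable {K : Type*} [Field K] {n : ℕ}

def finSumFinTwoMul (n : ℕ) : Fin n ⊕ Fin n ≃ Fin (2 * n) :=
  finSumFinEquiv.trans (finCongr (two_mul n).symm)

theorem sympOmega_submatrix_finSumFinTwoMul :
    (sympOmega n K).submatrix (finSumFinTwoMul n) (finSumFinTwoMul n) =
      fromBlocks 0 1 (-1) 0 := by
  ext (i | i) (j | j) <;>
    simp only [sympOmega, finSumFinTwoMul, Equiv.coe_trans, submatrix_apply, Function.comp_apply,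
      finSumFinEquiv_apply_left, finSumFinEquiv_apply_right, finCongr_apply, Fin.natAdd_eq_addNat,
      of_apply, Fin.val_cast, Fin.val_castAdd, Fin.val_addNat, Nat.add_right_cancel_iff,
      fromBlocks_apply₁₁, fromBlocks_apply₁₂, fromBlocks_apply₂₁, fromBlocks_apply₂₂,
      Matrix.zero_apply, Matrix.neg_apply, one_apply, Fin.ext_iff] <;>
    split_ifs <;> first | (exfalso; omega) | simp

theorem sympInner_eq_dotProduct_mulVec (x y : Fin (2 * n) → K) :
    sympInner n x y = x ⬝ᵥ (sympOmega n K *ᵥ y) := by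
  set e := finSumFinTwoMul n
  have hx : x ⬝ᵥ (sympOmega n K *ᵥ y) =
      (x ∘ e) ⬝ᵥ ((sympOmega n K).submatrix e e *ᵥ (y ∘ e)) := by
    rw [submatrix_mulVec_equiv, ← dotProduct_comp_equiv_symm]
    simp [Function.comp_def]
  rw [hx, sympOmega_submatrix_finSumFinTwoMul, ← Sum.elim_comp_inl_inr (y ∘ e),
    ← Sum.elim_comp_inl_inr (x ∘ e), fromBlocks_mulVec, sumElim_dotProduct_sumElim]
  simp only [sympInner, sub_eq_add_neg, Finset.sum_add_distrib, dotProduct, Function.comp_apply,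
    Sum.elim_comp_inl_inr, neg_mulVec, one_mulVec, zero_mulVec, Pi.add_apply, Pi.zero_apply,
    Pi.neg_apply, zero_add, add_zero, mul_neg, Finset.sum_neg_distrib]
  -- `e (Sum.inl i)` and `e (Sum.inr i)` unfold to `⟨i, _⟩` and `⟨n + i, _⟩`
  rfl

theorem sympInner_swap (x y : Fin (2 * n) → K) : sympInner n y x = -sympInner n x y := by
  simp only [sympInner, ← Finset.sum_neg_distrib, neg_sub, mul_comm]

theorem mul_sympOmega_mul_transpose_apply {m p : Type*} (A : Matrix m (Fin (2 * n)) K)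
    (B : Matrix p (Fin (2 * n)) K) (i : m) (j : p) :
    (A * sympOmega n K * Bᵀ) i j = sympInner n (A i) (B j) := by
  rw [sympInner_eq_dotProduct_mulVec, dotProduct_mulVec, ← mul_apply_eq_vecMul]
  rfl

theorem sympInner_vecMul_vecMul {Q : Matrix (Fin (2 * n)) (Fin (2 * n)) K}
    (hQ : Q * sympOmega n K * Qᵀ = sympOmega n K) (x y : Fin (2 * n) → K) :
    sympInner n (x ᵥ* Q) (y ᵥ* Q) = sympInner n x y := by
  rw [sympInner_eq_dotProduct_mulVec, sympInner_eq_dotProduct_mulVec, ← mulVec_transpose Q y,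
    ← dotProduct_mulVec, mulVec_mulVec, mulVec_mulVec, hQ]

theorem map_sympDual_le {Q : Matrix (Fin (2 * n)) (Fin (2 * n)) K}
    (hQ : Q * sympOmega n K * Qᵀ = sympOmega n K) (C : Submodule K (Fin (2 * n) → K)) :
    (sympDual n C).map Q.vecMulLinear ≤ sympDual n (C.map Q.vecMulLinear) := by
  rintro _ ⟨y, hy, rfl⟩ _ ⟨x, hx, rfl⟩
  simpa [sympInner_vecMul_vecMul hQ] using hy x hx

theorem mul_sympOmega_mul_transpose_eq_zero {m p : Type*} {C : Submodule K (Fin (2 * n) → K)}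
    {A : Matrix m (Fin (2 * n)) K} {B : Matrix p (Fin (2 * n)) K} (hA : ∀ i, A i ∈ C)
    (hB : ∀ j, B j ∈ sympDual n C) :
    A * sympOmega n K * Bᵀ = 0 ∧ B * sympOmega n K * Aᵀ = 0 := by
  constructor <;> ext i j <;> rw [mul_sympOmega_mul_transpose_apply, Matrix.zero_apply]
  · exact hB j _ (hA i)
  · rw [sympInner_swap, hB i _ (hA j), neg_zero]

end Symplectic

/-- Description of the stabilizer of a symplectic LCD `[2n,2k]_q` code in
the symplectic group: `Q` stabilizes `C` iff `Q = M⁻¹ · diag(Q₁,Q₂) · M`, where `M` is the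
matrix obtained by stacking a generator matrix `G` of `C` on top of a generator matrix `H`
of `C^{⊥s}`, and `Q₁, Q₂` are invertible matrices preserving the Gram matrices `G Ω_n Gᵀ`
and `H Ω_n Hᵀ`. -/
theorem symplecticLCD_stabilizer
    {K : Type*} [Field K]
    (n k : ℕ) (hkn : 2 * k ≤ 2 * n)
    (C : Submodule K (Fin (2 * n) → K))
    (G : Matrix (Fin (2 * k)) (Fin (2 * n)) K)
    (hGli : LinearIndependent K fun i : Fin (2 * k) => G i)
    (hGsp : Submodule.span K (Set.range fun i : Fin (2 * k) => G i) = C)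
    (H : Matrix (Fin (2 * n - 2 * k)) (Fin (2 * n)) K)
    (hHli : LinearIndependent K fun i : Fin (2 * n - 2 * k) => H i)
    (hHsp : Submodule.span K (Set.range fun i : Fin (2 * n - 2 * k) => H i) = sympDual n C)
    (M : Matrix (Fin (2 * n)) (Fin (2 * n)) K)
    (hM : M = Matrix.of fun i j => Matrix.fromRows G H
      ((finSumFinEquiv.trans
        (finCongr (by omega : 2 * k + (2 * n - 2 * k) = 2 * n))).symm i) j)
    (hMunit : IsUnit M)
    (Q : Matrix (Fin (2 * n)) (Fin (2 * n)) K) :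
    (IsUnit Q ∧ Q * sympOmega n K * Qᵀ = sympOmega n K ∧
        C.map (Matrix.vecMulLinear Q) = C) ↔
    ∃ (Q₁ : Matrix (Fin (2 * k)) (Fin (2 * k)) K)
      (Q₂ : Matrix (Fin (2 * n - 2 * k)) (Fin (2 * n - 2 * k)) K),
      IsUnit Q₁ ∧ IsUnit Q₂ ∧
      Q₁ * (G * sympOmega n K * Gᵀ) * Q₁ᵀ = G * sympOmega n K * Gᵀ ∧
      Q₂ * (H * sympOmega n K * Hᵀ) * Q₂ᵀ = H * sympOmega n K * Hᵀ ∧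
      Q = M⁻¹ *
          (Matrix.fromBlocks Q₁ 0 0 Q₂).submatrix
            ⇑(finSumFinEquiv.trans
                (finCongr (by omega : 2 * k + (2 * n - 2 * k) = 2 * n))).symm
            ⇑(finSumFinEquiv.trans
                (finCongr (by omega : 2 * k + (2 * n - 2 * k) = 2 * n))).symm *
          M := by
  classical
  set e := finSumFinEquiv.trans (finCongr (by omega : 2 * k + (2 * n - 2 * k) = 2 * n))
  replace hM : M = (fromRows G H).submatrix e.symm id := hM
  replace hGsp : Submodule.span K (Set.range G.row) = C := hGsp
  replace hHsp : Submodule.span K (Set.range H.row) = sympDual n C := hHsp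
  have hGC (i) : G i ∈ C := hGsp ▸ Submodule.subset_span ⟨i, rfl⟩
  have hHC (j) : H j ∈ sympDual n C := hHsp ▸ Submodule.subset_span ⟨j, rfl⟩
  obtain ⟨hGH, hHG⟩ := mul_sympOmega_mul_transpose_eq_zero hGC hHC
  have hconj (Q₁ Q₂) : Q = M⁻¹ * (fromBlocks Q₁ 0 0 Q₂).submatrix e.symm e.symm * M ↔
      G * Q = Q₁ * G ∧ H * Q = Q₂ * H :=
    (eq_nonsing_inv_mul_mul_iff hMunit).trans (hM ▸ submatrix_fromRows_mul_eq_mul_iff e G H Q Q₁ Q₂)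
  constructor
  · rintro ⟨hQ, hQΩ, hQC⟩
    obtain ⟨Q₁, hGQ⟩ := exists_mul_eq_mul_of_map_le (A := G) (by rw [hGsp, hQC])
    obtain ⟨Q₂, hHQ⟩ := exists_mul_eq_mul_of_map_le (A := H)
      (by simpa only [hHsp, hQC] using map_sympDual_le hQΩ C)
    refine ⟨Q₁, Q₂, isUnit_of_mul_eq_mul hGli hQ hGQ, isUnit_of_mul_eq_mul hHli hQ hHQ, ?_, ?_,
      (hconj Q₁ Q₂).2 ⟨hGQ, hHQ⟩⟩
    · rw [mul_mul_mul_transpose_of_mul_eq_mul hGQ hGQ, hQΩ]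
    · rw [mul_mul_mul_transpose_of_mul_eq_mul hHQ hHQ, hQΩ]
  · rintro ⟨Q₁, Q₂, hQ₁, hQ₂, hG, hH, hQ⟩
    obtain ⟨hGQ, hHQ⟩ := (hconj Q₁ Q₂).1 hQ
    refine ⟨?_, ?_, ?_⟩
    · rw [hQ]
      exact ((isUnit_nonsing_inv_iff.2 hMunit).mul
        ((isUnit_submatrix_equiv _ _).2 (isUnit_fromBlocks_zero₂₁.2 ⟨hQ₁, hQ₂⟩))).mul hMunit
    · have hΩ := hM ▸
        submatrix_fromRows_mul_mul_transpose_eq_of_mul_eq_mul e G H hGQ hHQ hG hH hGH hHG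
      exact hMunit.mul_left_cancel (((isUnit_transpose M).2 hMunit).mul_right_cancel hΩ)
    · rw [← hGsp, map_vecMulLinear_span_range_row, hGQ, span_range_row_mul_of_isUnit hQ₁]
end
end
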